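/- arXiv:1106.4117 — 13 statements merged into one kernel-verified Lean document; each statement's English description precedes it below -/
import Mathlib

section
/- Let k be a field of characteristic 2, n an even positive integer, and A an associative unital k-algebra containing elements g, a, b satisfying the B(V)#kG-relations. Set T = (Σ_{i=0}^{n-1} g^i)·a·b·a·b³. Then gT = T, aT = 0, bT = 0, Tg = T, Ta = 0 and Tb = 0. (Hence T behaves as a two-sided integral, so B(V)#kG is unimodular.) -/
/-- Over a field of characteristic 2, with `g, a, b` satisfying the
`B(V)#kG`-relations (`n` an even positive integer), the element
`T = (∑_{i<n} g^i) * a*b*a*b^3` is a two-sided integral: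
`gT = T`, `aT = 0`, `bT = 0`, `Tg = T`, `Ta = 0`, `Tb = 0`. -/
theorem stmt1 {k : Type*} [Field k] [CharP k 2] {A : Type*} [Ring A] [Algebra k A]
    (n : ℕ) (hn : 0 < n) (hn2 : 2 ∣ n) (g a b : A)
    (hgn : g ^ n = 1) (hag : a * g = g * a) (hbg : b * g = g * a + g * b)
    (ha2 : a ^ 2 = 0) (hb4 : b ^ 4 = 0)
    (hbaba : b * a * b * a = a * b * a * b)
    (hb2a : b ^ 2 * a = a * b ^ 2 + a * b * a) :
    let T := (∑ i ∈ Finset.range n, g ^ i) * (a * b * a * b ^ 3)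
    g * T = T ∧ a * T = 0 ∧ b * T = 0 ∧ T * g = T ∧ T * a = 0 ∧ T * b = 0 := by
  intro T
  -- characteristic 2 facts
  have h2k : (2 : k) = 0 := by exact_mod_cast CharP.cast_eq_zero k 2
  have h2 : (2 : A) = 0 := by
    rw [← map_ofNat (algebraMap k A) 2, h2k, map_zero]
  have hx : ∀ x : A, x + x = 0 := fun x => by rw [← two_mul, h2, zero_mul]
  have haa : a * a = 0 := by rw [← pow_two]; exact ha2
  set S : A := ∑ i ∈ Finset.range n, g ^ i with hS
  set w : A := a * b * a * b ^ 3 with hw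
  -- geometric sum facts
  have hgS : g * S = S := by
    have h : (g - 1) * S = 0 := by rw [hS, mul_geom_sum, hgn, sub_self]
    have h' := sub_mul g 1 S
    rw [h, one_mul] at h'
    exact sub_eq_zero.mp h'.symm
  have hSg : S * g = S := by
    have h : S * (g - 1) = 0 := by rw [hS, geom_sum_mul, hgn, sub_self]
    have h' := mul_sub S g 1
    rw [h, mul_one] at h'
    exact sub_eq_zero.mp h'.symm
  have hcag : Commute a g := hag
  have hcaS : Commute a S := Commute.sum_right _ _ _ fun i _ => (hcag.pow_right i)
  -- word computations
  have hbw : b * w = 0 := by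
    calc b * w = (b * a * b * a) * b ^ 3 := by rw [hw]; noncomm_ring
    _ = (a * b * a * b) * b ^ 3 := by rw [hbaba]
    _ = a * b * a * b ^ 4 := by noncomm_ring
    _ = 0 := by rw [hb4, mul_zero]
  have hwb : w * b = 0 := by
    calc w * b = a * b * a * b ^ 4 := by rw [hw]; noncomm_ring
    _ = 0 := by rw [hb4, mul_zero]
  have haw : a * w = 0 := by
    calc a * w = a ^ 2 * (b * (a * b ^ 3)) := by rw [hw]; noncomm_ring
    _ = 0 := by rw [ha2, zero_mul]
  have hwa : w * a = 0 := by
    calc w * a = a * b * a * b * (b ^ 2 * a) := by rw [hw]; noncomm_ring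
    _ = a * b * a * b * (a * b ^ 2 + a * b * a) := by rw [hb2a]
    _ = (a * b * a * b) * a * b ^ 2 + (a * b * a * b) * (a * (b * a)) := by noncomm_ring
    _ = (b * a * b * a) * a * b ^ 2 + (b * a * b * a) * (a * (b * a)) := by rw [hbaba]
    _ = b * a * b * (a * a) * b ^ 2 + b * a * b * (a * a) * (b * a) := by noncomm_ring
    _ = 0 := by rw [haa]; simp
  -- commuting g past the word w
  have h1 : b * g = g * (a + b) := by rw [hbg, mul_add]
  have h3 : b * (b * (b * g)) = g * ((a + b) * ((a + b) * (a + b))) := by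
    rw [show b * (b * (b * g)) = b * (b * (g * (a+b))) from by rw [h1]]
    rw [show b * (b * (g * (a+b))) = b * ((b*g) * (a+b)) from by rw [mul_assoc]]
    rw [h1, show b * (g * (a+b) * (a+b)) = (b*g) * ((a+b)*(a+b)) from by noncomm_ring]
    rw [h1]; noncomm_ring
  have hkey : (a * b * a) * g = g * (a * b * a) := by
    calc (a * b * a) * g = a * b * (a * g) := by noncomm_ring
    _ = a * b * (g * a) := by rw [hag]
    _ = a * (b * g) * a := by noncomm_ring
    _ = a * (g * (a + b)) * a := by rw [h1]
    _ = (a * g) * ((a + b) * a) := by noncomm_ring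
    _ = (g * a) * ((a + b) * a) := by rw [hag]
    _ = g * ((a * a) * a + a * (b * a)) := by noncomm_ring
    _ = g * (a * b * a) := by rw [haa]; noncomm_ring
  have hT1 : a * b * a * b * a * b = 0 := by
    calc a * b * a * b * a * b = a * ((b * a * b * a) * b) := by noncomm_ring
    _ = a * ((a * b * a * b) * b) := by rw [hbaba]
    _ = (a * a) * (b * (a * (b * b))) := by noncomm_ring
    _ = 0 := by rw [haa, zero_mul]
  have hT2 : a * b * a * b * b * a = 0 := by
    calc a * b * a * b * b * a = a * b * a * (b ^ 2 * a) := by noncomm_ring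
    _ = a * b * a * (a * b ^ 2 + a * b * a) := by rw [hb2a]
    _ = a * b * (a * a) * b ^ 2 + a * b * (a * a) * (b * a) := by noncomm_ring
    _ = 0 := by rw [haa]; simp
  have hE : (a * b * a) * ((a + b) * ((a + b) * (a + b))) = w := by
    calc (a * b * a) * ((a + b) * ((a + b) * (a + b)))
        = a * b * (a * a) * (a * a) + a * b * (a * a) * (a * b)
          + a * b * (a * a) * (b * a) + a * b * (a * a) * (b * b)
          + (a * b * a * b) * (a * a) + a * b * a * b * a * b
          + a * b * a * b * b * a + a * b * a * b ^ 3 := by noncomm_ring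
    _ = w := by rw [haa, hT1, hT2, hw]; simp
  have hwg : w * g = g * w := by
    calc w * g = (a * b * a) * (b * (b * (b * g))) := by rw [hw]; noncomm_ring
    _ = (a * b * a) * (g * ((a + b) * ((a + b) * (a + b)))) := by rw [h3]
    _ = ((a * b * a) * g) * ((a + b) * ((a + b) * (a + b))) := by noncomm_ring
    _ = g * ((a * b * a) * ((a + b) * ((a + b) * (a + b)))) := by rw [hkey]; noncomm_ring
    _ = g * w := by rw [hE]
  -- b and even powers of g
  have hgeom : ∀ m : ℕ, ∑ i ∈ Finset.range (2 * m), g ^ i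
      = (∑ j ∈ Finset.range m, (g ^ 2) ^ j) * (1 + g) := by
    intro m
    induction m with
    | zero => simp
    | succ m ih =>
      rw [Finset.sum_range_succ, add_mul, ← ih,
        show 2 * (m + 1) = 2 * m + 1 + 1 from by ring,
        Finset.sum_range_succ, Finset.sum_range_succ, ← pow_mul]
      rw [mul_add, mul_one, ← pow_succ]
      noncomm_ring
  obtain ⟨m, rfl⟩ := hn2
  set P : A := ∑ j ∈ Finset.range m, (g ^ 2) ^ j with hP
  have hSP : S = P * (1 + g) := by rw [hS, hP]; exact hgeom m
  have hbgg : b * g ^ 2 = g ^ 2 * b := by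
    have : b * (g * g) = (g * g) * b := by
      calc b * (g * g) = (g * a + g * b) * g := by rw [← mul_assoc, hbg]
      _ = g * (a * g) + g * (b * g) := by noncomm_ring
      _ = g * (g * a) + g * (g * a + g * b) := by rw [hag, hbg]
      _ = (g * (g * a) + g * (g * a)) + (g * g) * b := by noncomm_ring
      _ = (g * g) * b := by rw [hx (g * (g * a)), zero_add]
    rw [pow_two]; exact this
  have hcbP : Commute b P := Commute.sum_right _ _ _ fun j _ => (Commute.pow_right hbgg j)
  have hbS : b * S = S * b + P * (g * a) := by
    rw [hSP]
    calc b * (P * (1 + g)) = P * (b * (1 + g)) := by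
          rw [← mul_assoc, hcbP.eq, mul_assoc]
    _ = P * ((1 + g) * b + g * a) := by
          rw [show b * (1 + g) = (1 + g) * b + g * a from by rw [mul_add, mul_one, hbg]; noncomm_ring]
    _ = P * (1 + g) * b + P * (g * a) := by noncomm_ring
  -- now conclude
  have c1 : g * T = T := by
    show g * (S * w) = S * w
    rw [← mul_assoc, hgS]
  have c2 : a * T = 0 := by
    show a * (S * w) = 0
    rw [← mul_assoc, hcaS.eq, mul_assoc, haw, mul_zero]
  have c3 : b * T = 0 := by
    show b * (S * w) = 0
    rw [← mul_assoc, hbS, add_mul, mul_assoc, hbw, mul_zero, mul_assoc, mul_assoc, haw,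
      mul_zero, mul_zero, add_zero]
  have c4 : T * g = T := by
    show S * w * g = S * w
    rw [mul_assoc, hwg, ← mul_assoc, hSg]
  have c5 : T * a = 0 := by
    show S * w * a = 0
    rw [mul_assoc, hwa, mul_zero]
  have c6 : T * b = 0 := by
    show S * w * b = 0
    rw [mul_assoc, hwb, mul_zero]
  exact ⟨c1, c2, c3, c4, c5, c6⟩
end

section
/- Let k be a field of characteristic p > 2 and A an associative unital k-algebra containing elements g, a, b with ag = ga, bg = ga + gb and ba = ab + (1/2)a². Then for all integers i, j ≥ 0: b·g^i = i·g^i·a + g^i·b, b·a^j = a^j·b + (j/2)·a^{j+1}, and b·g^i·a^j = (i + j/2)·g^i·a^{j+1} + g^i·a^j·b. In particular g^p commutes with each of g, a and b. -/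
/-- In char `p > 2`, with `a*g = g*a`, `b*g = g*a + g*b` and
`b*a = a*b + (1/2)a^2`, one has `b*g^i = i•(g^i*a) + g^i*b`,
`b*a^j = a^j*b + (j/2)•a^(j+1)` and
`b*g^i*a^j = (i + j/2)•(g^i*a^(j+1)) + g^i*a^j*b`; in particular `g^p` commutes
with `g`, `a` and `b`. -/
theorem stmt2 {k : Type*} [Field k] (p : ℕ) [CharP k p] (hp : 2 < p)
    {A : Type*} [Ring A] [Algebra k A] (g a b : A)
    (hag : a * g = g * a) (hbg : b * g = g * a + g * b)
    (hba : b * a = a * b + (1 / 2 : k) • a ^ 2) :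
    (∀ i : ℕ, b * g ^ i = (i : k) • (g ^ i * a) + g ^ i * b) ∧
    (∀ j : ℕ, b * a ^ j = a ^ j * b + ((j : k) / 2) • a ^ (j + 1)) ∧
    (∀ i j : ℕ, b * g ^ i * a ^ j
      = ((i : k) + (j : k) / 2) • (g ^ i * a ^ (j + 1)) + g ^ i * a ^ j * b) ∧
    (g ^ p * g = g * g ^ p ∧ g ^ p * a = a * g ^ p ∧ g ^ p * b = b * g ^ p) := by
  have hcomm : ∀ i : ℕ, a * g ^ i = g ^ i * a := fun i =>
    ((Commute.pow_right (show Commute a g from hag) i)).eq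
  have h1 : ∀ i : ℕ, b * g ^ i = (i : k) • (g ^ i * a) + g ^ i * b := by
    intro i
    induction i with
    | zero => simp
    | succ n ih =>
      have : b * g ^ (n + 1) = (b * g ^ n) * g := by rw [pow_succ, mul_assoc]
      rw [this, ih, add_mul, smul_mul_assoc, mul_assoc, mul_assoc, hag, hbg,
        mul_add, ← mul_assoc, ← mul_assoc, ← pow_succ]
      push_cast
      rw [add_smul, one_smul]
      abel
  have h2 : ∀ j : ℕ, b * a ^ j = a ^ j * b + ((j : k) / 2) • a ^ (j + 1) := by
    intro j
    induction j with
    | zero => simp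
    | succ n ih =>
      have : b * a ^ (n + 1) = (b * a ^ n) * a := by rw [pow_succ, mul_assoc]
      rw [this, ih, add_mul, smul_mul_assoc, mul_assoc, hba, mul_add,
        mul_smul_comm, ← mul_assoc, ← pow_succ]
      have e : a ^ n * a ^ 2 = a ^ (n + 1 + 1) := by
        rw [← pow_add]
      rw [e, ← pow_succ, add_assoc, ← add_smul]
      have e2 : (1 / 2 + (n : k) / 2) = ((n : k) + 1) / 2 := by ring
      rw [e2]
      push_cast
      ring_nf
  refine ⟨h1, h2, ?_, ?_⟩
  · intro i j
    rw [show b * g ^ i * a ^ j = (b * g ^ i) * a ^ j from rfl, h1 i, add_mul,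
      smul_mul_assoc, mul_assoc (g ^ i) b (a ^ j), h2 j, mul_add,
      mul_smul_comm, mul_assoc (g ^ i) a (a ^ j), ← pow_succ',
      ← mul_assoc (g ^ i) (a ^ j) b, add_smul]
    abel
  · have hp0 : (p : k) = 0 := CharP.cast_eq_zero k p
    refine ⟨(Commute.pow_left rfl p), (hcomm p).symm, ?_⟩
    rw [h1 p, hp0, zero_smul, zero_add]
end

section
/- Let k be a field of characteristic p > 2 and A an associative unital k-algebra containing elements a, b with ba = ab + (1/2)a². Then for every m with 1 ≤ m ≤ p − 1 there exist scalars α_{m,0}, α_{m,1}, …, α_{m,m} ∈ k such that a·b^m = Σ_{i=0}^{m} α_{m,i}·b^{m−i}·a^{i+1}, with α_{m,0} = 1, α_{m,1} = −m/2 and (when m ≥ 2) α_{m,2} = (1/4)m(m−1). -/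
private lemma descFact_rec (m j : ℕ) :
    (m+1).descFactorial (j+1) = m.descFactorial (j+1) + (j+1) * m.descFactorial j := by
  rw [Nat.succ_descFactorial_succ, Nat.descFactorial_succ, ← add_mul]
  rcases le_or_gt j m with h | h
  · congr 1; omega
  · rw [Nat.descFactorial_eq_zero_iff_lt.mpr h, mul_zero, mul_zero]

private lemma stmt3_key {k : Type*} [Field k]
    {A : Type*} [Ring A] [Algebra k A] (a b : A)
    (hba : b * a = a * b + (1 / 2 : k) • a ^ 2) :
    ∀ j : ℕ, a ^ j * b = b * a ^ j - ((j : k) * (1/2 : k)) • a ^ (j+1) := by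
  intro j
  induction j with
  | zero => simp
  | succ j ih =>
    have hab : a * b = b * a - (1/2 : k) • a ^ 2 := by
      rw [eq_sub_iff_add_eq, ← hba]
    calc a ^ (j+1) * b = a * (a ^ j * b) := by rw [pow_succ', mul_assoc]
      _ = a * (b * a ^ j) - ((j : k) * (1/2 : k)) • (a * a ^ (j+1)) := by
            rw [ih, mul_sub, mul_smul_comm]
      _ = (a * b) * a ^ j - ((j : k) * (1/2 : k)) • a ^ (j+2) := by
            rw [mul_assoc, ← pow_succ']
      _ = b * a ^ (j+1) - (1/2 : k) • a ^ (j+2)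
            - ((j : k) * (1/2 : k)) • a ^ (j+2) := by
            rw [hab, sub_mul, smul_mul_assoc, mul_assoc, ← pow_succ',
              ← pow_add, Nat.add_comm 2 j]
      _ = b * a ^ (j+1) - (((j+1 : ℕ) : k) * (1/2 : k)) • a ^ (j+1+1) := by
            push_cast
            rw [add_mul, one_mul, add_smul]
            abel

private lemma stmt3_main {k : Type*} [Field k]
    {A : Type*} [Ring A] [Algebra k A] (a b : A)
    (hba : b * a = a * b + (1 / 2 : k) • a ^ 2) (m : ℕ) :
    a * b ^ m = ∑ i ∈ Finset.range (m + 1),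
      ((-(1/2 : k)) ^ i * (Nat.descFactorial m i : k)) • (b ^ (m - i) * a ^ (i + 1)) := by
  induction m with
  | zero => simp
  | succ m ih =>
    calc a * b ^ (m+1) = (a * b ^ m) * b := by rw [pow_succ, mul_assoc]
      _ = ∑ i ∈ Finset.range (m+1),
            ((-(1/2 : k)) ^ i * (Nat.descFactorial m i : k)) •
              (b ^ (m - i) * (a ^ (i+1) * b)) := by
          rw [ih, Finset.sum_mul]
          exact Finset.sum_congr rfl fun i _ => by rw [smul_mul_assoc, mul_assoc]
      _ = ∑ i ∈ Finset.range (m+1),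
            (((-(1/2 : k)) ^ i * (Nat.descFactorial m i : k)) • (b ^ (m+1 - i) * a ^ (i+1))
             - (((-(1/2 : k)) ^ i * (Nat.descFactorial m i : k)) * (((i+1 : ℕ) : k) * (1/2 : k)))
                • (b ^ (m - i) * a ^ (i+2))) := by
          refine Finset.sum_congr rfl fun i hi => ?_
          have hi' : i ≤ m := Nat.lt_succ_iff.mp (Finset.mem_range.mp hi)
          rw [stmt3_key a b hba (i+1), mul_sub, ← mul_assoc, mul_smul_comm,
            smul_sub, smul_smul, ← pow_succ]
          have h1 : m - i + 1 = m + 1 - i := by omega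
          rw [h1]
      _ = (∑ i ∈ Finset.range (m+1),
            ((-(1/2 : k)) ^ i * (Nat.descFactorial m i : k)) • (b ^ (m+1 - i) * a ^ (i+1)))
          - ∑ i ∈ Finset.range (m+1),
            (((-(1/2 : k)) ^ i * (Nat.descFactorial m i : k)) * (((i+1 : ℕ) : k) * (1/2 : k)))
                • (b ^ (m - i) * a ^ (i+2)) := by
          rw [Finset.sum_sub_distrib]
      _ = ∑ i ∈ Finset.range (m+1+1),
            ((-(1/2 : k)) ^ i * (Nat.descFactorial (m+1) i : k)) •
              (b ^ (m+1 - i) * a ^ (i+1)) := by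
          rw [Finset.sum_range_succ' (fun i =>
            ((-(1/2 : k)) ^ i * (Nat.descFactorial (m+1) i : k)) •
              (b ^ (m+1 - i) * a ^ (i+1))) (m+1)]
          rw [Finset.sum_range_succ' (fun i =>
            ((-(1/2 : k)) ^ i * (Nat.descFactorial m i : k)) •
              (b ^ (m+1 - i) * a ^ (i+1))) m]
          have hL : (∑ i ∈ Finset.range m,
              ((-(1/2 : k)) ^ (i+1) * (Nat.descFactorial m (i+1) : k)) •
                (b ^ (m+1 - (i+1)) * a ^ (i+1+1)))
              = ∑ i ∈ Finset.range (m+1),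
                ((-(1/2 : k)) ^ (i+1) * (Nat.descFactorial m (i+1) : k)) •
                  (b ^ (m+1 - (i+1)) * a ^ (i+1+1)) := by
            rw [Finset.sum_range_succ,
              Nat.descFactorial_eq_zero_iff_lt.mpr (Nat.lt_succ_self m)]
            simp
          rw [hL, add_sub_right_comm, ← Finset.sum_sub_distrib]
          congr 1
          refine Finset.sum_congr rfl fun i _ => ?_
          have h1 : m + 1 - (i+1) = m - i := by omega
          have hco : (-(1/2 : k)) ^ (i+1) * (Nat.descFactorial (m+1) (i+1) : k)
              = (-(1/2 : k)) ^ (i+1) * (Nat.descFactorial m (i+1) : k)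
                - (-(1/2 : k)) ^ i * (Nat.descFactorial m i : k)
                    * (((i+1 : ℕ) : k) * (1/2 : k)) := by
            rw [descFact_rec m i]
            push_cast
            ring
          rw [h1, ← sub_smul, hco]

/-- In char `p > 2`, with `b*a = a*b + (1/2)a^2`, for each
`1 ≤ m ≤ p - 1` there are scalars `α_{m,i}` with
`a*b^m = ∑_{i=0}^m α_{m,i} • (b^(m-i) * a^(i+1))`, `α_{m,0} = 1`,
`α_{m,1} = -m/2`, and (for `m ≥ 2`) `α_{m,2} = m(m-1)/4`. -/
theorem stmt3 {k : Type*} [Field k] (p : ℕ) [CharP k p] (hp : 2 < p)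
    {A : Type*} [Ring A] [Algebra k A] (a b : A)
    (hba : b * a = a * b + (1 / 2 : k) • a ^ 2) :
    ∀ m : ℕ, 1 ≤ m → m ≤ p - 1 →
      ∃ α : ℕ → k,
        a * b ^ m = ∑ i ∈ Finset.range (m + 1), α i • (b ^ (m - i) * a ^ (i + 1)) ∧
        α 0 = 1 ∧ α 1 = -(m : k) / 2 ∧
        (2 ≤ m → α 2 = (m : k) * ((m : k) - 1) / 4) := by
  intro m hm1 _
  refine ⟨fun i => (-(1/2 : k)) ^ i * (Nat.descFactorial m i : k),
    stmt3_main a b hba m, by simp, ?_, ?_⟩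
  · show (-(1/2 : k)) ^ 1 * (Nat.descFactorial m 1 : k) = -(m : k) / 2
    rw [pow_one, Nat.descFactorial_one]
    ring
  · intro hm2
    show (-(1/2 : k)) ^ 2 * (Nat.descFactorial m 2 : k) = (m : k) * ((m : k) - 1) / 4
    have h2 : m.descFactorial 2 = m * (m - 1) := by
      rw [Nat.descFactorial_succ, Nat.descFactorial_one, Nat.mul_comm]
    rw [h2]
    have hcast : ((m * (m-1) : ℕ) : k) = (m : k) * ((m : k) - 1) := by
      push_cast [Nat.cast_sub hm1]
      ring
    have hq : (-(1/2 : k)) ^ 2 = 1/4 := by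
      rw [neg_pow, div_pow]
      norm_num
    rw [hcast, hq]
    ring
end

section
/- Let k be a field of characteristic p > 2, n a positive integer divisible by p, λ, μ ∈ k, and A an associative unital k-algebra containing elements g, a, b satisfying the H(λ,μ)-relations. Set T = (Σ_{i=0}^{n-1} g^i)·a^{p−1}·b^{p−1}. Then gT = T, aT = 0, bT = 0, Tg = T, Ta = 0 and Tb = 0. (Hence T behaves as a two-sided integral, so H(λ,μ) is unimodular.) -/
/-- Over a field of char `p > 2`, with `g, a, b` satisfying the
`H(λ,μ)`-relations (`p ∣ n`, `n > 0`), the element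
`T = (∑_{i<n} g^i) * a^(p-1) * b^(p-1)` is a two-sided integral:
`gT = T`, `aT = 0`, `bT = 0`, `Tg = T`, `Ta = 0`, `Tb = 0`. -/
theorem stmt5 {k : Type*} [Field k] (p : ℕ) [CharP k p] (hp : 2 < p)
    (n : ℕ) (hn : 0 < n) (hpn : p ∣ n) (lam mu : k)
    {A : Type*} [Ring A] [Algebra k A] (g a b : A)
    (hgn : g ^ n = 1) (hag : a * g = g * a) (hbg : b * g = g * a + g * b)
    (hap : a ^ p = lam • ((1 : A) - g ^ p)) (hbp : b ^ p = mu • ((1 : A) - g ^ p))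
    (hba : b * a = a * b + (1 / 2 : k) • a ^ 2) :
    let T := (∑ i ∈ Finset.range n, g ^ i) * (a ^ (p - 1) * b ^ (p - 1))
    g * T = T ∧ a * T = 0 ∧ b * T = 0 ∧ T * g = T ∧ T * a = 0 ∧ T * b = 0 := by
  intro T
  set S : A := ∑ i ∈ Finset.range n, g ^ i with hSdef
  set R : A := ∑ i ∈ Finset.range n, ((i : k)) • g ^ i with hRdef
  have hT : T = S * (a ^ (p - 1) * b ^ (p - 1)) := rfl
  have hpk : (p : k) = 0 := CharP.cast_eq_zero k p
  have hnk : (n : k) = 0 := by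
    obtain ⟨q, rfl⟩ := hpn
    push_cast [hpk]; ring
  -- telescoping sum
  have hsum : (∑ i ∈ Finset.range n, g ^ (i + 1)) = S := by
    have h1 := Finset.sum_range_succ (fun i => g ^ i) n
    have h2 := Finset.sum_range_succ' (fun i => g ^ i) n
    have h3 : S + g ^ n = (∑ i ∈ Finset.range n, g ^ (i + 1)) + g ^ 0 :=
      h1.symm.trans h2
    rw [hgn, pow_zero] at h3
    exact (add_right_cancel h3).symm
  have hSg : S * g = S := by
    rw [hSdef, Finset.sum_mul]
    simp only [← pow_succ]
    exact hsum
  have hgS : g * S = S := by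
    rw [hSdef, Finset.mul_sum]
    simp only [← pow_succ']
    exact hsum
  have hRg : R * g = R - S := by
    rw [hRdef, Finset.sum_mul]
    simp only [smul_mul_assoc, ← pow_succ]
    have e1 : ∀ i : ℕ, ((i : k)) • g ^ (i + 1)
        = (((i + 1 : ℕ)) : k) • g ^ (i + 1) - g ^ (i + 1) := by
      intro i; push_cast; rw [add_smul, one_smul]; abel
    rw [Finset.sum_congr rfl fun i _ => e1 i, Finset.sum_sub_distrib, hsum]
    congr 1
    have h1 := Finset.sum_range_succ (fun i => ((i : k)) • g ^ i) n
    have h2 := Finset.sum_range_succ' (fun i => ((i : k)) • g ^ i) n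
    have h3 : R + ((n : k)) • g ^ n
        = (∑ i ∈ Finset.range n, (((i + 1 : ℕ)) : k) • g ^ (i + 1))
          + (((0 : ℕ)) : k) • g ^ 0 := h1.symm.trans h2
    rw [hnk, zero_smul, add_zero] at h3
    simpa using h3.symm
  have hSgm : ∀ m : ℕ, S * g ^ m = S := by
    intro m; induction m with
    | zero => simp
    | succ m ih => rw [pow_succ, ← mul_assoc, ih, hSg]
  have hRgm : ∀ m : ℕ, R * g ^ m = R - ((m : k)) • S := by
    intro m; induction m with
    | zero => simp
    | succ m ih =>
      rw [pow_succ, ← mul_assoc, ih, sub_mul, hRg, smul_mul_assoc, hSg]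
      push_cast
      rw [add_smul, one_smul]
      abel
  have hRgp : R * g ^ p = R := by rw [hRgm p, hpk, zero_smul, sub_zero]
  have hSgp : S * g ^ p = S := hSgm p
  -- commutation of a with g and S
  have hcag : Commute a g := hag
  have hcaS : Commute a S := by
    rw [hSdef]; exact Commute.sum_right _ _ _ fun i _ => hcag.pow_right i
  have haS : a * S = S * a := hcaS
  have hSap : S * a ^ p = 0 := by
    rw [hap, mul_smul_comm, mul_sub, mul_one, hSgp, sub_self, smul_zero]
  have hRap : R * a ^ p = 0 := by
    rw [hap, mul_smul_comm, mul_sub, mul_one, hRgp, sub_self, smul_zero]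
  have hcomm1 : Commute (a ^ (p - 1)) ((1 : A) - g ^ p) :=
    ((Commute.one_right (a ^ (p - 1))).sub_right
      ((hcag.pow_right p).pow_left (p - 1)))
  have hSa1gp : S * a ^ (p - 1) * ((1 : A) - g ^ p) = 0 := by
    rw [mul_assoc, hcomm1, ← mul_assoc, mul_sub, mul_one, hSgp, sub_self,
      zero_mul]
  have hSapb : S * a ^ (p - 1) * b ^ p = 0 := by
    rw [hbp, mul_smul_comm, hSa1gp, smul_zero]
  -- b vs powers of a
  have hbam : ∀ m : ℕ, b * a ^ m = a ^ m * b + (((m : k)) / 2) • a ^ (m + 1) := by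
    intro m; induction m with
    | zero => simp
    | succ m ih =>
      have hcoef : (1 / 2 : k) + ((m : k)) / 2 = (((m + 1 : ℕ)) : k) / 2 := by
        push_cast; ring
      calc b * a ^ (m + 1) = b * a ^ m * a := by rw [pow_succ, ← mul_assoc]
        _ = (a ^ m * b + (((m : k)) / 2) • a ^ (m + 1)) * a := by rw [ih]
        _ = a ^ m * (b * a) + (((m : k)) / 2) • (a ^ (m + 1) * a) := by
            rw [add_mul, smul_mul_assoc, mul_assoc]
        _ = a ^ m * (a * b) + (1 / 2 : k) • (a ^ m * a ^ 2)
              + (((m : k)) / 2) • a ^ (m + 1 + 1) := by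
            rw [hba, mul_add, mul_smul_comm, ← pow_succ, add_assoc]
        _ = a ^ (m + 1) * b + ((1 / 2 : k) • a ^ (m + 1 + 1)
              + (((m : k)) / 2) • a ^ (m + 1 + 1)) := by
            rw [← mul_assoc, ← pow_succ, ← pow_add]
            norm_num [add_assoc]
        _ = a ^ (m + 1) * b + ((((m + 1 : ℕ)) : k) / 2) • a ^ (m + 1 + 1) := by
            rw [← add_smul, hcoef]
  -- the key vanishing lemma: S a^{p-1} b^m a^{r+1} = 0
  have hP : ∀ m r : ℕ, S * a ^ (p - 1) * b ^ m * a ^ (r + 1) = 0 := by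
    intro m
    induction m with
    | zero =>
      intro r
      rw [pow_zero, mul_one, mul_assoc, ← pow_add,
        show p - 1 + (r + 1) = p + r from by omega, pow_add, ← mul_assoc,
        hSap, zero_mul]
    | succ m ih =>
      intro r
      have key := hbam (r + 1)
      calc S * a ^ (p - 1) * b ^ (m + 1) * a ^ (r + 1)
          = S * a ^ (p - 1) * b ^ m * (b * a ^ (r + 1)) := by
            rw [pow_succ, ← mul_assoc, mul_assoc _ b]
        _ = S * a ^ (p - 1) * b ^ m * a ^ (r + 1) * b
            + (((r + 1 : ℕ) : k) / 2) •
              (S * a ^ (p - 1) * b ^ m * a ^ (r + 1 + 1)) := by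
            rw [key, mul_add, mul_smul_comm, ← mul_assoc]
        _ = 0 := by rw [ih r, ih (r + 1), zero_mul, smul_zero, add_zero]
  -- S a^{p-1} b^j (a+b)^m = S a^{p-1} b^{j+m}
  have hQ : ∀ m j : ℕ,
      S * a ^ (p - 1) * b ^ j * (a + b) ^ m = S * a ^ (p - 1) * b ^ (j + m) := by
    intro m
    induction m with
    | zero => intro j; simp
    | succ m ih =>
      intro j
      have hstep : S * a ^ (p - 1) * b ^ j * (a + b)
          = S * a ^ (p - 1) * b ^ (j + 1) := by
        rw [mul_add]
        have h0 : S * a ^ (p - 1) * b ^ j * a = 0 := by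
          simpa using hP j 0
        rw [h0, zero_add, mul_assoc, ← pow_succ]
      rw [pow_succ', ← mul_assoc, hstep, ih (j + 1),
        show j + 1 + m = j + (m + 1) from by omega]
  -- b^m g = g (a+b)^m
  have hbgm : ∀ m : ℕ, b ^ m * g = g * (a + b) ^ m := by
    intro m; induction m with
    | zero => simp
    | succ m ih =>
      have hbg' : b * g = g * (a + b) := by rw [hbg, mul_add]
      rw [pow_succ, mul_assoc, hbg', ← mul_assoc, ih, mul_assoc, ← pow_succ]
  -- b vs g^i and S
  have hbgi : ∀ i : ℕ, b * g ^ i = g ^ i * b + ((i : k)) • (g ^ i * a) := by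
    intro i; induction i with
    | zero => simp
    | succ i ih =>
      calc b * g ^ (i + 1) = b * g ^ i * g := by rw [pow_succ, ← mul_assoc]
        _ = g ^ i * (b * g) + ((i : k)) • (g ^ i * (a * g)) := by
            rw [ih, add_mul, smul_mul_assoc, mul_assoc, mul_assoc]
        _ = g ^ i * (g * a) + g ^ i * (g * b)
              + ((i : k)) • (g ^ i * (g * a)) := by
            rw [hbg, mul_add, hag]
        _ = g ^ (i + 1) * b + (((i : k)) + 1) • (g ^ (i + 1) * a) := by
            rw [add_smul, one_smul]
            simp only [← mul_assoc, ← pow_succ]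
            abel
        _ = g ^ (i + 1) * b + (((i + 1 : ℕ)) : k) • (g ^ (i + 1) * a) := by
            push_cast; ring_nf
  have hbS : b * S = S * b + R * a := by
    rw [hSdef, Finset.mul_sum]
    rw [Finset.sum_congr rfl fun i _ => hbgi i, Finset.sum_add_distrib]
    congr 1
    · rw [Finset.sum_mul]
    · rw [hRdef, Finset.sum_mul]
      simp only [smul_mul_assoc, mul_assoc]
  have hap1 : a * a ^ (p - 1) = a ^ p := by
    rw [← pow_succ', show p - 1 + 1 = p from by omega]
  refine ⟨?_, ?_, ?_, ?_, ?_, ?_⟩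
  · -- g T = T
    rw [hT, ← mul_assoc, hgS]
  · -- a T = 0
    rw [hT, ← mul_assoc, haS, mul_assoc, ← mul_assoc a, hap1, ← mul_assoc,
      hSap, zero_mul]
  · -- b T = 0
    rw [hT, ← mul_assoc, hbS, add_mul]
    have t1 : S * b * (a ^ (p - 1) * b ^ (p - 1)) = 0 := by
      rw [mul_assoc, ← mul_assoc b, hbam (p - 1), add_mul, mul_add,
        smul_mul_assoc, mul_smul_comm]
      have e1 : a ^ (p - 1) * b * b ^ (p - 1) = a ^ (p - 1) * b ^ p := by
        rw [mul_assoc, ← pow_succ', show p - 1 + 1 = p from by omega]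
      have e2 : a ^ (p - 1 + 1) * b ^ (p - 1) = a ^ p * b ^ (p - 1) := by
        rw [show p - 1 + 1 = p from by omega]
      rw [e1, e2, ← mul_assoc, ← mul_assoc, hSap, hSapb, zero_mul, smul_zero,
        add_zero]
    have t2 : R * a * (a ^ (p - 1) * b ^ (p - 1)) = 0 := by
      rw [mul_assoc, ← mul_assoc a, hap1, ← mul_assoc, hRap, zero_mul]
    rw [t1, t2, add_zero]
  · -- T g = T
    rw [hT]
    have hag' : a ^ (p - 1) * g = g * a ^ (p - 1) := hcag.pow_left (p - 1)
    have hq := hQ (p - 1) 0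
    rw [pow_zero, mul_one, zero_add] at hq
    calc S * (a ^ (p - 1) * b ^ (p - 1)) * g
        = S * (a ^ (p - 1) * (b ^ (p - 1) * g)) := by rw [mul_assoc, mul_assoc]
      _ = S * (a ^ (p - 1) * g * (a + b) ^ (p - 1)) := by
          rw [hbgm (p - 1)]; simp only [mul_assoc]
      _ = S * g * (a ^ (p - 1) * (a + b) ^ (p - 1)) := by
          rw [hag']; simp only [mul_assoc]
      _ = S * a ^ (p - 1) * (a + b) ^ (p - 1) := by rw [hSg, ← mul_assoc]
      _ = S * (a ^ (p - 1) * b ^ (p - 1)) := by rw [hq, mul_assoc]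
  · -- T a = 0
    have := hP (p - 1) 0
    rw [zero_add, pow_one] at this
    rw [hT, ← mul_assoc] at *
    exact this
  · -- T b = 0
    rw [hT, mul_assoc, mul_assoc, ← pow_succ,
      show p - 1 + 1 = p from by omega, ← mul_assoc]
    exact hSapb
end

section
/- Let k be a field of characteristic p > 2, s ≥ 1, n = p^s, and λ, μ ∈ k. Then the images of the generators a and b in the algebra H(λ,μ) lie in the Jacobson radical of H(λ,μ). -/
open FreeAlgebra in
/-- The defining relations of the Hopf algebra `H(λ,μ)` of Cibils–Lauve–Witherspoon, on the
free algebra on three generators `g = ι 0`, `a = ι 1`, `b = ι 2`: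
`g^n = 1`, `ag = ga`, `bg = ga + gb`, `a^p = λ(1-g^p)`, `b^p = μ(1-g^p)`,
`ba = ab + (1/2)a²`. -/
inductive HRel (k : Type*) [Field k] (n p : ℕ) (lam mu : k) :
    FreeAlgebra k (Fin 3) → FreeAlgebra k (Fin 3) → Prop
  | gn : HRel k n p lam mu (ι k (0 : Fin 3) ^ n) 1
  | ag : HRel k n p lam mu (ι k (1 : Fin 3) * ι k (0 : Fin 3)) (ι k (0 : Fin 3) * ι k (1 : Fin 3))
  | bg : HRel k n p lam mu (ι k (2 : Fin 3) * ι k (0 : Fin 3))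
      (ι k (0 : Fin 3) * ι k (1 : Fin 3) + ι k (0 : Fin 3) * ι k (2 : Fin 3))
  | ap : HRel k n p lam mu (ι k (1 : Fin 3) ^ p)
      (algebraMap k (FreeAlgebra k (Fin 3)) lam * (1 - ι k (0 : Fin 3) ^ p))
  | bp : HRel k n p lam mu (ι k (2 : Fin 3) ^ p)
      (algebraMap k (FreeAlgebra k (Fin 3)) mu * (1 - ι k (0 : Fin 3) ^ p))
  | ba : HRel k n p lam mu (ι k (2 : Fin 3) * ι k (1 : Fin 3))
      (ι k (1 : Fin 3) * ι k (2 : Fin 3)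
        + algebraMap k (FreeAlgebra k (Fin 3)) (1 / 2) * ι k (1 : Fin 3) ^ 2)

/-- The algebra `H(λ,μ)`: the quotient of the free algebra on `g, a, b` by the two-sided
ideal generated by the relations `HRel`. -/
abbrev HAlg (k : Type*) [Field k] (n p : ℕ) (lam mu : k) := RingQuot (HRel k n p lam mu)

/-- The image of the generator `g` in `H(λ,μ)`. -/
noncomputable def Hg (k : Type*) [Field k] (n p : ℕ) (lam mu : k) : HAlg k n p lam mu :=
  RingQuot.mkAlgHom k (HRel k n p lam mu) (FreeAlgebra.ι k (0 : Fin 3))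

/-- The image of the generator `a` in `H(λ,μ)`. -/
noncomputable def Ha (k : Type*) [Field k] (n p : ℕ) (lam mu : k) : HAlg k n p lam mu :=
  RingQuot.mkAlgHom k (HRel k n p lam mu) (FreeAlgebra.ι k (1 : Fin 3))

/-- The image of the generator `b` in `H(λ,μ)`. -/
noncomputable def Hb (k : Type*) [Field k] (n p : ℕ) (lam mu : k) : HAlg k n p lam mu :=
  RingQuot.mkAlgHom k (HRel k n p lam mu) (FreeAlgebra.ι k (2 : Fin 3))

/-! Every `y a` and `y b` is nilpotent, so `1 + y a` and `1 + y b` are units. Since `aH ⊆ Ha`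
and `bH ⊆ Ha + Hb`, induction gives `(ya)^m ∈ H a^m` and `(yb)^m ∈ Ha + H b^m`; and `a`, `b` are
nilpotent because `a^p`, `b^p` are multiples of `1 - g^p`, whose `p^s`-th power is
`1 - (g^(p^s))^p = 0` by the Frobenius. -/

section Nilpotent

variable {R : Type*} [Ring R] {a b : R}

theorem IsNilpotent.mul_left_of_forall_mul_eq_mul (ha : IsNilpotent a)
    (haR : ∀ x, ∃ y, a * x = y * a) (x : R) : IsNilpotent (x * a) := by
  have key : ∀ m : ℕ, ∃ z, (x * a) ^ m = z * a ^ m := by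
    intro m
    induction m with
    | zero => exact ⟨1, by simp⟩
    | succ m ih =>
      obtain ⟨z, hz⟩ := ih
      obtain ⟨w, hw⟩ := haR z
      refine ⟨x * w, ?_⟩
      calc (x * a) ^ (m + 1) = x * (a * z) * a ^ m := by rw [pow_succ', hz]; noncomm_ring
        _ = x * w * a ^ (m + 1) := by rw [hw, pow_succ']; noncomm_ring
  obtain ⟨N, hN⟩ := ha
  obtain ⟨z, hz⟩ := key N
  exact ⟨N, by rw [hz, hN, mul_zero]⟩

theorem IsNilpotent.mul_left_of_forall_mul_eq_mul_add (hb : IsNilpotent b) (ha : IsNilpotent a)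
    (haR : ∀ x, ∃ y, a * x = y * a) (hbR : ∀ x, ∃ u v, b * x = u * a + v * b) (x : R) :
    IsNilpotent (x * b) := by
  have key : ∀ m : ℕ, ∃ z w, (x * b) ^ m = z * a + w * b ^ m := by
    intro m
    induction m with
    | zero => exact ⟨0, 1, by simp⟩
    | succ m ih =>
      obtain ⟨z, w, hzw⟩ := ih
      obtain ⟨u, v, huv⟩ := hbR w
      obtain ⟨t, ht⟩ := haR (b ^ m)
      refine ⟨x * (b * z) + x * u * t, x * v, ?_⟩
      calc (x * b) ^ (m + 1) = x * (b * z) * a + x * (b * w) * b ^ m := by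
            rw [pow_succ', hzw]; noncomm_ring
        _ = x * (b * z) * a + x * u * (a * b ^ m) + x * v * b ^ (m + 1) := by
            rw [huv, pow_succ']; noncomm_ring
        _ = (x * (b * z) + x * u * t) * a + x * v * b ^ (m + 1) := by
            rw [ht]; noncomm_ring
  obtain ⟨N, hN⟩ := hb
  obtain ⟨z, w, hzw⟩ := key N
  rw [hN, mul_zero, add_zero] at hzw
  exact IsNilpotent.of_pow (hzw ▸ ha.mul_left_of_forall_mul_eq_mul haR z)

theorem Ideal.mem_jacobson_bot_of_forall_isNilpotent_mul {x : R}
    (h : ∀ y, IsNilpotent (y * x)) : x ∈ (⊥ : Ideal R).jacobson := by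
  refine Ideal.mem_jacobson_iff.mpr fun y => ?_
  obtain ⟨u, hu⟩ := (h y).isUnit_one_add
  refine ⟨↑u⁻¹, ?_⟩
  have h_eq : ↑u⁻¹ * y * x + ↑u⁻¹ - 1 = ↑u⁻¹ * (1 + y * x) - 1 := by noncomm_ring
  rw [Ideal.mem_bot, h_eq, ← hu, Units.inv_mul, sub_self]

theorem isNilpotent_one_sub_of_pow_char_pow_eq_one (p s : ℕ) [Fact p.Prime] [CharP R p]
    (h : a ^ p ^ s = 1) : IsNilpotent (1 - a) :=
  ⟨p ^ s, by rw [sub_pow_char_pow_of_commute p s (Commute.one_left a), one_pow, h, sub_self]⟩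

end Nilpotent

section HAlg

variable {k : Type*} [Field k] {n p : ℕ} {lam mu : k}

local notation "H" => HAlg k n p lam mu
local notation "G" => Hg k n p lam mu
local notation "A" => Ha k n p lam mu
local notation "B" => Hb k n p lam mu

theorem Hg_pow_eq_one : G ^ n = 1 := by
  simpa [Hg] using RingQuot.mkAlgHom_rel k (s := HRel k n p lam mu) .gn

theorem Ha_mul_Hg : A * G = G * A := by
  simpa [Ha, Hg] using RingQuot.mkAlgHom_rel k (s := HRel k n p lam mu) .ag

theorem Hb_mul_Hg : B * G = G * A + G * B := by
  simpa [Ha, Hb, Hg] using RingQuot.mkAlgHom_rel k (s := HRel k n p lam mu) .bg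

theorem Ha_pow : A ^ p = algebraMap k H lam * (1 - G ^ p) := by
  simpa [Ha, Hg] using RingQuot.mkAlgHom_rel k (s := HRel k n p lam mu) .ap

theorem Hb_pow : B ^ p = algebraMap k H mu * (1 - G ^ p) := by
  simpa [Hb, Hg] using RingQuot.mkAlgHom_rel k (s := HRel k n p lam mu) .bp

theorem Hb_mul_Ha : B * A = A * B + (1 / 2 : k) • (A * A) := by
  have h := RingQuot.mkAlgHom_rel k (s := HRel k n p lam mu) .ba
  simp only [map_mul, map_add, map_pow, AlgHom.commutes] at h
  rw [Ha, Hb, h, Algebra.smul_def, pow_two]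

theorem HAlg.induction {P : H → Prop} (algebraMap : ∀ r, P (algebraMap k H r))
    (g : P G) (a : P A) (b : P B) (mul : ∀ x y, P x → P y → P (x * y))
    (add : ∀ x y, P x → P y → P (x + y)) (x : H) : P x := by
  obtain ⟨f, rfl⟩ := RingQuot.mkAlgHom_surjective k (HRel k n p lam mu) x
  induction f using FreeAlgebra.induction with
  | grade0 r => simpa using algebraMap r
  | grade1 i => fin_cases i; exacts [g, a, b]
  | mul x y hx hy => simpa using mul _ _ hx hy
  | add x y hx hy => simpa using add _ _ hx hy

theorem Ha_mul_eq_mul_Ha (x : H) : ∃ y, A * x = y * A := by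
  induction x using HAlg.induction with
  | algebraMap r => exact ⟨algebraMap k H r, (Algebra.commutes r A).symm⟩
  | g => exact ⟨G, Ha_mul_Hg⟩
  | a => exact ⟨A, rfl⟩
  | b => exact ⟨B - (1 / 2 : k) • A, by rw [sub_mul, smul_mul_assoc, Hb_mul_Ha]; abel⟩
  | mul x y hx hy =>
    obtain ⟨x', hx'⟩ := hx
    obtain ⟨y', hy'⟩ := hy
    exact ⟨x' * y', by rw [← mul_assoc, hx', mul_assoc, hy', mul_assoc]⟩
  | add x y hx hy =>
    obtain ⟨x', hx'⟩ := hx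
    obtain ⟨y', hy'⟩ := hy
    exact ⟨x' + y', by rw [mul_add, hx', hy', add_mul]⟩

theorem Hb_mul_eq_mul_Ha_add_mul_Hb (x : H) : ∃ u v, B * x = u * A + v * B := by
  induction x using HAlg.induction with
  | algebraMap r => exact ⟨0, algebraMap k H r, by rw [zero_mul, zero_add, Algebra.commutes]⟩
  | g => exact ⟨G, G, Hb_mul_Hg⟩
  | a => exact ⟨B, 0, by rw [zero_mul, add_zero]⟩
  | b => exact ⟨0, B, by rw [zero_mul, zero_add]⟩
  | mul x y hx hy =>
    obtain ⟨u, v, huv⟩ := hx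
    obtain ⟨u', v', huv'⟩ := hy
    obtain ⟨y', hy'⟩ := Ha_mul_eq_mul_Ha y
    refine ⟨u * y' + v * u', v * v', ?_⟩
    calc B * (x * y) = u * (A * y) + v * (B * y) := by rw [← mul_assoc, huv]; noncomm_ring
      _ = (u * y' + v * u') * A + v * v' * B := by rw [hy', huv']; noncomm_ring
  | add x y hx hy =>
    obtain ⟨u, v, huv⟩ := hx
    obtain ⟨u', v', huv'⟩ := hy
    exact ⟨u + u', v + v', by rw [mul_add, huv, huv']; noncomm_ring⟩

end HAlg

section CharP

variable {k : Type*} [Field k] {p : ℕ} [Fact p.Prime] [CharP k p] {s : ℕ} {lam mu : k}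

local notation "H" => HAlg k (p ^ s) p lam mu

theorem isNilpotent_one_sub_Hg_pow : IsNilpotent (1 - Hg k (p ^ s) p lam mu ^ p) := by
  nontriviality H
  have : CharP H p := charP_of_injective_algebraMap' k p
  refine isNilpotent_one_sub_of_pow_char_pow_eq_one p s ?_
  rw [← pow_mul, mul_comm, pow_mul, Hg_pow_eq_one, one_pow]

theorem isNilpotent_Ha : IsNilpotent (Ha k (p ^ s) p lam mu) := by
  refine IsNilpotent.of_pow (m := p) ?_
  rw [Ha_pow]
  exact (Algebra.commute_algebraMap_left lam _).isNilpotent_mul_left isNilpotent_one_sub_Hg_pow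

theorem isNilpotent_Hb : IsNilpotent (Hb k (p ^ s) p lam mu) := by
  refine IsNilpotent.of_pow (m := p) ?_
  rw [Hb_pow]
  exact (Algebra.commute_algebraMap_left mu _).isNilpotent_mul_left isNilpotent_one_sub_Hg_pow

end CharP

theorem stmt6_general {k : Type*} [Field k] (p : ℕ) [CharP k p] (hp : 2 < p)
    (s : ℕ) (lam mu : k) :
    Ha k (p ^ s) p lam mu ∈ (⊥ : Ideal (HAlg k (p ^ s) p lam mu)).jacobson ∧
    Hb k (p ^ s) p lam mu ∈ (⊥ : Ideal (HAlg k (p ^ s) p lam mu)).jacobson := by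
  have : Fact p.Prime := ⟨CharP.char_is_prime_of_two_le k p hp.le⟩
  exact ⟨Ideal.mem_jacobson_bot_of_forall_isNilpotent_mul
      (isNilpotent_Ha.mul_left_of_forall_mul_eq_mul Ha_mul_eq_mul_Ha),
    Ideal.mem_jacobson_bot_of_forall_isNilpotent_mul
      (isNilpotent_Hb.mul_left_of_forall_mul_eq_mul_add isNilpotent_Ha Ha_mul_eq_mul_Ha
        Hb_mul_eq_mul_Ha_add_mul_Hb)⟩

/-- For `k` of characteristic `p > 2` and `n = p^s` with `s ≥ 1`, the
images of the generators `a` and `b` in `H(λ,μ)` lie in the Jacobson radical. -/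
theorem stmt6 {k : Type*} [Field k] (p : ℕ) [CharP k p] (hp : 2 < p)
    (s : ℕ) (hs : 1 ≤ s) (lam mu : k) :
    Ha k (p ^ s) p lam mu ∈ (⊥ : Ideal (HAlg k (p ^ s) p lam mu)).jacobson ∧
    Hb k (p ^ s) p lam mu ∈ (⊥ : Ideal (HAlg k (p ^ s) p lam mu)).jacobson :=
  stmt6_general p hp s lam mu
end

section
/- Let k be a field of characteristic p > 2, n a positive integer divisible by p, λ, μ ∈ k, and A an associative unital k-algebra containing elements g, a, b satisfying the H(λ,μ)-relations, and suppose g^{p^m} ≠ 1 in A for every integer m ≥ 1. Then a^{p^m} = λ^{p^{m−1}}·(1 − g^{p^m}) and b^{p^m} = μ^{p^{m−1}}·(1 − g^{p^m}) for all m ≥ 1. Consequently, if λ ≠ 0 then a is not nilpotent, and if μ ≠ 0 then b is not nilpotent; if moreover A is finite dimensional over k and λμ ≠ 0, then neither a nor b lies in the Jacobson radical of A. -/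
/-!
In characteristic `p` the Frobenius `x ↦ x ^ p` is additive on commuting elements, so raising
`a ^ p = λ • (1 - g ^ p)` to the power `p ^ (m - 1)` gives
`a ^ p ^ m = λ ^ p ^ (m - 1) • (1 - g ^ p ^ m)`, and likewise for `b`. Since `g ^ p ^ m ≠ 1`,
these powers never vanish, so `a` and `b` are not nilpotent when `λ, μ ≠ 0`. A finite-dimensional
algebra is Artinian, so its Jacobson radical is nilpotent and cannot contain `a` or `b`.
-/

theorem not_isNilpotent_of_forall_exists_pow_ne_zero {M₀ : Type*} [MonoidWithZero M₀] {x : M₀}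
    (h : ∀ N, ∃ n, N ≤ n ∧ x ^ n ≠ 0) : ¬IsNilpotent x := by
  rintro ⟨N, hN⟩
  obtain ⟨n, hNn, hn⟩ := h N
  exact hn (pow_eq_zero_of_le hNn hN)

theorem IsArtinianRing.isNilpotent_of_mem_jacobson_bot {R : Type*} [Ring R] [IsArtinianRing R]
    {x : R} (hx : x ∈ (⊥ : Ideal R).jacobson) : IsNilpotent x := by
  obtain ⟨N, hN⟩ := IsArtinianRing.isNilpotent_jacobson_bot (R := R)
  exact ⟨N, by simpa [hN] using Ideal.pow_mem_pow hx N⟩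

section PowerOfOneSub

variable {k A : Type*} [Ring A] (p : ℕ) [ExpChar A p] {c x : A}

theorem pow_pow_succ_eq_smul_one_sub_pow [CommSemiring k] [Algebra k A] {ν : k}
    (hc : c ^ p = ν • (1 - x ^ p)) (m : ℕ) :
    c ^ p ^ (m + 1) = ν ^ p ^ m • (1 - x ^ p ^ (m + 1)) := by
  rw [pow_succ', pow_mul, hc, smul_pow, sub_pow_expChar_pow_of_commute p m (Commute.one_left _),
    one_pow, ← pow_mul]

theorem not_isNilpotent_of_pow_eq_smul_one_sub [Field k] [Algebra k A] (hp : 1 < p) {ν : k}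
    (hν : ν ≠ 0) (hx : ∀ m : ℕ, 1 ≤ m → x ^ (p ^ m) ≠ 1) (hc : c ^ p = ν • (1 - x ^ p)) :
    ¬IsNilpotent c := by
  refine not_isNilpotent_of_forall_exists_pow_ne_zero fun N ↦
    ⟨p ^ (N + 1), (Nat.lt_pow_self hp).le.trans' N.le_succ, ?_⟩
  rw [pow_pow_succ_eq_smul_one_sub_pow p hc]
  exact smul_ne_zero (pow_ne_zero _ hν) (sub_ne_zero.2 (hx _ N.succ_pos).symm)

end PowerOfOneSub

theorem stmt7_general {k : Type*} [Field k] (p : ℕ) [CharP k p] (hp : 2 < p)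
    (lam mu : k)
    {A : Type*} [Ring A] [Algebra k A] (g a b : A)
    (hap : a ^ p = lam • ((1 : A) - g ^ p)) (hbp : b ^ p = mu • ((1 : A) - g ^ p))
    (hg1 : ∀ m : ℕ, 1 ≤ m → g ^ (p ^ m) ≠ 1) :
    (∀ m : ℕ, 1 ≤ m → a ^ (p ^ m) = (lam ^ (p ^ (m - 1))) • ((1 : A) - g ^ (p ^ m))) ∧
    (∀ m : ℕ, 1 ≤ m → b ^ (p ^ m) = (mu ^ (p ^ (m - 1))) • ((1 : A) - g ^ (p ^ m))) ∧
    (lam ≠ 0 → ¬ IsNilpotent a) ∧ (mu ≠ 0 → ¬ IsNilpotent b) ∧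
    (FiniteDimensional k A → lam * mu ≠ 0 →
      a ∉ (⊥ : Ideal A).jacobson ∧ b ∉ (⊥ : Ideal A).jacobson) := by
  have : Nontrivial A := nontrivial_of_ne _ _ (hg1 1 le_rfl)
  have : NeZero p := ⟨by omega⟩
  have : Fact p.Prime := CharP.char_is_prime_of_pos k p
  have : CharP A p := charP_of_injective_algebraMap' k p
  have powers {c : A} {ν : k} (hc : c ^ p = ν • (1 - g ^ p)) (m : ℕ) (hm : 1 ≤ m) :
      c ^ p ^ m = ν ^ p ^ (m - 1) • (1 - g ^ p ^ m) := by
    obtain ⟨m, rfl⟩ := Nat.exists_eq_add_of_le' hm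
    exact pow_pow_succ_eq_smul_one_sub_pow p hc m
  have not_nil {c : A} {ν : k} (hc : c ^ p = ν • (1 - g ^ p)) (hν : ν ≠ 0) : ¬IsNilpotent c :=
    not_isNilpotent_of_pow_eq_smul_one_sub p (by omega) hν hg1 hc
  refine ⟨powers hap, powers hbp, not_nil hap, not_nil hbp, fun _ hlm ↦ ?_⟩
  have : IsArtinianRing A := .of_finite k A
  exact ⟨fun ha ↦ not_nil hap (left_ne_zero_of_mul hlm)
      (IsArtinianRing.isNilpotent_of_mem_jacobson_bot ha),
    fun hb ↦ not_nil hbp (right_ne_zero_of_mul hlm)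
      (IsArtinianRing.isNilpotent_of_mem_jacobson_bot hb)⟩

/-- Over a field of char `p > 2`, with `g, a, b` satisfying the
`H(λ,μ)`-relations and `g^(p^m) ≠ 1` for all `m ≥ 1`, one has
`a^(p^m) = λ^(p^(m-1)) • (1 - g^(p^m))` and `b^(p^m) = μ^(p^(m-1)) • (1 - g^(p^m))`;
hence if `λ ≠ 0` then `a` is not nilpotent, if `μ ≠ 0` then `b` is not nilpotent, and
if moreover `A` is finite dimensional and `λμ ≠ 0`, then neither `a` nor `b` lies in the
Jacobson radical of `A`. -/
theorem stmt7 {k : Type*} [Field k] (p : ℕ) [CharP k p] (hp : 2 < p)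
    (n : ℕ) (hn : 0 < n) (hpn : p ∣ n) (lam mu : k)
    {A : Type*} [Ring A] [Algebra k A] (g a b : A)
    (hgn : g ^ n = 1) (hag : a * g = g * a) (hbg : b * g = g * a + g * b)
    (hap : a ^ p = lam • ((1 : A) - g ^ p)) (hbp : b ^ p = mu • ((1 : A) - g ^ p))
    (hba : b * a = a * b + (1 / 2 : k) • a ^ 2)
    (hg1 : ∀ m : ℕ, 1 ≤ m → g ^ (p ^ m) ≠ 1) :
    (∀ m : ℕ, 1 ≤ m → a ^ (p ^ m) = (lam ^ (p ^ (m - 1))) • ((1 : A) - g ^ (p ^ m))) ∧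
    (∀ m : ℕ, 1 ≤ m → b ^ (p ^ m) = (mu ^ (p ^ (m - 1))) • ((1 : A) - g ^ (p ^ m))) ∧
    (lam ≠ 0 → ¬ IsNilpotent a) ∧ (mu ≠ 0 → ¬ IsNilpotent b) ∧
    (FiniteDimensional k A → lam * mu ≠ 0 →
      a ∉ (⊥ : Ideal A).jacobson ∧ b ∉ (⊥ : Ideal A).jacobson) :=
  stmt7_general p hp lam mu g a b hap hbp hg1
end

section
/- Let k be a field of characteristic p > 2, n a positive integer divisible by p, and λ, μ ∈ k with λ ≠ 0. Fix ν ∈ k with ν^p = λ (such ν exists if k is algebraically closed). Then there is a k-algebra isomorphism φ : H(λ,μ) → H(1, λ^{-1}μ) determined on generators by φ(g) = g₀, φ(a) = ν·a₀, φ(b) = ν·b₀, where g₀, a₀, b₀ denote the generators of H(1, λ^{-1}μ); its inverse sends g₀ ↦ g, a₀ ↦ ν^{-1}·a, b₀ ↦ ν^{-1}·b. -/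
section Aux

variable {k : Type*} [Field k] (n p : ℕ) (l m : k)

theorem Hrel_gn : Hg k n p l m ^ n = 1 := by
  rw [Hg, ← map_pow, ← map_one (RingQuot.mkAlgHom k (HRel k n p l m))]
  exact RingQuot.mkAlgHom_rel k HRel.gn

theorem Hrel_ag : Ha k n p l m * Hg k n p l m = Hg k n p l m * Ha k n p l m := by
  rw [Ha, Hg, ← map_mul, ← map_mul]
  exact RingQuot.mkAlgHom_rel k HRel.ag

theorem Hrel_bg : Hb k n p l m * Hg k n p l m
    = Hg k n p l m * Ha k n p l m + Hg k n p l m * Hb k n p l m := by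
  rw [Ha, Hb, Hg, ← map_mul, ← map_mul, ← map_mul, ← map_add]
  exact RingQuot.mkAlgHom_rel k HRel.bg

theorem Hrel_ap : Ha k n p l m ^ p
    = algebraMap k (HAlg k n p l m) l * (1 - Hg k n p l m ^ p) := by
  have h := RingQuot.mkAlgHom_rel k (HRel.ap (k := k) (n := n) (p := p) (lam := l) (mu := m))
  simp only [map_pow, map_mul, map_sub, map_one, AlgHom.commutes] at h
  exact h

theorem Hrel_bp : Hb k n p l m ^ p
    = algebraMap k (HAlg k n p l m) m * (1 - Hg k n p l m ^ p) := by
  have h := RingQuot.mkAlgHom_rel k (HRel.bp (k := k) (n := n) (p := p) (lam := l) (mu := m))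
  simp only [map_pow, map_mul, map_sub, map_one, AlgHom.commutes] at h
  exact h

theorem Hrel_ba : Hb k n p l m * Ha k n p l m
    = Ha k n p l m * Hb k n p l m
      + algebraMap k (HAlg k n p l m) (1 / 2) * Ha k n p l m ^ 2 := by
  rw [Ha, Hb, ← map_mul, ← map_mul, ← map_pow,
    ← AlgHom.commutes (RingQuot.mkAlgHom k (HRel k n p l m)) (1 / 2 : k), ← map_mul, ← map_add]
  exact RingQuot.mkAlgHom_rel k HRel.ba

variable (l' m' : k)

/-- The generator images for the scaling homomorphism. -/
noncomputable def scaleGen (c : k) : Fin 3 → HAlg k n p l' m' := fun i =>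
  if i = 0 then Hg k n p l' m' else if i = 1 then c • Ha k n p l' m' else c • Hb k n p l' m'

theorem scaleGen_zero (c : k) : scaleGen n p l' m' c 0 = Hg k n p l' m' := rfl
theorem scaleGen_one (c : k) : scaleGen n p l' m' c 1 = c • Ha k n p l' m' := rfl
theorem scaleGen_two (c : k) : scaleGen n p l' m' c 2 = c • Hb k n p l' m' := rfl

theorem scaleGen_rel (c : k) (hl : c ^ p * l' = l) (hm : c ^ p * m' = m) :
    ∀ ⦃x y : FreeAlgebra k (Fin 3)⦄, HRel k n p l m x y →
      (FreeAlgebra.lift k (scaleGen n p l' m' c)) x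
        = (FreeAlgebra.lift k (scaleGen n p l' m' c)) y := by
  intro x y h
  induction h with
  | gn =>
      simp only [map_pow, map_one, FreeAlgebra.lift_ι_apply, scaleGen_zero]
      exact Hrel_gn n p l' m'
  | ag =>
      simp only [map_mul, FreeAlgebra.lift_ι_apply, scaleGen_zero, scaleGen_one,
        smul_mul_assoc, mul_smul_comm]
      rw [Hrel_ag]
  | bg =>
      simp only [map_mul, map_add, FreeAlgebra.lift_ι_apply, scaleGen_zero, scaleGen_one,
        scaleGen_two, smul_mul_assoc, mul_smul_comm]
      rw [Hrel_bg, smul_add]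
  | ap =>
      simp only [map_pow, map_mul, map_one, map_sub, FreeAlgebra.lift_ι_apply, scaleGen_zero,
        scaleGen_one, AlgHom.commutes, smul_pow]
      rw [Hrel_ap, ← smul_mul_assoc, Algebra.smul_def, ← map_mul, hl]
  | bp =>
      simp only [map_pow, map_mul, map_one, map_sub, FreeAlgebra.lift_ι_apply, scaleGen_zero,
        scaleGen_two, AlgHom.commutes, smul_pow]
      rw [Hrel_bp, ← smul_mul_assoc, Algebra.smul_def, ← map_mul, hm]
  | ba =>
      simp only [map_mul, map_add, map_pow, FreeAlgebra.lift_ι_apply, scaleGen_zero,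
        scaleGen_one, scaleGen_two, AlgHom.commutes, smul_pow, smul_mul_assoc, mul_smul_comm]
      rw [Hrel_ba, smul_smul, smul_add, smul_smul, sq c]

/-- The scaling algebra homomorphism `H(λ,μ) → H(λ',μ')`, `g ↦ g`, `a ↦ c•a`, `b ↦ c•b`,
when `c^p λ' = λ` and `c^p μ' = μ`. -/
noncomputable def scaleHom (c : k) (hl : c ^ p * l' = l) (hm : c ^ p * m' = m) :
    HAlg k n p l m →ₐ[k] HAlg k n p l' m' :=
  RingQuot.liftAlgHom k
    ⟨FreeAlgebra.lift k (scaleGen n p l' m' c), scaleGen_rel n p l m l' m' c hl hm⟩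

theorem scaleHom_Hg (c : k) (hl : c ^ p * l' = l) (hm : c ^ p * m' = m) :
    scaleHom n p l m l' m' c hl hm (Hg k n p l m) = Hg k n p l' m' := by
  rw [scaleHom, Hg, RingQuot.liftAlgHom_mkAlgHom_apply, FreeAlgebra.lift_ι_apply, scaleGen_zero]

theorem scaleHom_Ha (c : k) (hl : c ^ p * l' = l) (hm : c ^ p * m' = m) :
    scaleHom n p l m l' m' c hl hm (Ha k n p l m) = c • Ha k n p l' m' := by
  rw [scaleHom, Ha, RingQuot.liftAlgHom_mkAlgHom_apply, FreeAlgebra.lift_ι_apply, scaleGen_one]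

theorem scaleHom_Hb (c : k) (hl : c ^ p * l' = l) (hm : c ^ p * m' = m) :
    scaleHom n p l m l' m' c hl hm (Hb k n p l m) = c • Hb k n p l' m' := by
  rw [scaleHom, Hb, RingQuot.liftAlgHom_mkAlgHom_apply, FreeAlgebra.lift_ι_apply, scaleGen_two]

theorem scaleHom_comp (c d : k) (hl : c ^ p * l' = l) (hm : c ^ p * m' = m)
    (hl' : d ^ p * l = l') (hm' : d ^ p * m = m') (hcd : c * d = 1) :
    (scaleHom n p l m l' m' c hl hm).comp (scaleHom n p l' m' l m d hl' hm')
      = AlgHom.id k (HAlg k n p l' m') := by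
  apply RingQuot.ringQuot_ext'
  apply FreeAlgebra.hom_ext
  funext i
  fin_cases i
  · show (scaleHom n p l m l' m' c hl hm) ((scaleHom n p l' m' l m d hl' hm')
        (Hg k n p l' m')) = Hg k n p l' m'
    rw [scaleHom_Hg, scaleHom_Hg]
  · show (scaleHom n p l m l' m' c hl hm) ((scaleHom n p l' m' l m d hl' hm')
        (Ha k n p l' m')) = Ha k n p l' m'
    rw [scaleHom_Ha, map_smul, scaleHom_Ha, smul_smul, mul_comm d c, hcd, one_smul]
  · show (scaleHom n p l m l' m' c hl hm) ((scaleHom n p l' m' l m d hl' hm')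
        (Hb k n p l' m')) = Hb k n p l' m'
    rw [scaleHom_Hb, map_smul, scaleHom_Hb, smul_smul, mul_comm d c, hcd, one_smul]

end Aux

/-- For `k` of characteristic `p > 2`, `p ∣ n`, `λ ≠ 0` and `ν` with
`ν^p = λ`, there is a `k`-algebra isomorphism `φ : H(λ,μ) ≃ H(1, λ⁻¹μ)` with
`φ(g) = g₀`, `φ(a) = ν•a₀`, `φ(b) = ν•b₀`, and inverse sending `g₀ ↦ g`,
`a₀ ↦ ν⁻¹•a`, `b₀ ↦ ν⁻¹•b`. -/
theorem stmt8 {k : Type*} [Field k] (p : ℕ) [CharP k p] (hp : 2 < p)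
    (n : ℕ) (hn : 0 < n) (hpn : p ∣ n) (lam mu : k) (hlam : lam ≠ 0)
    (ν : k) (hν : ν ^ p = lam) :
    ∃ φ : HAlg k n p lam mu ≃ₐ[k] HAlg k n p 1 (lam⁻¹ * mu),
      φ (Hg k n p lam mu) = Hg k n p 1 (lam⁻¹ * mu) ∧
      φ (Ha k n p lam mu) = ν • Ha k n p 1 (lam⁻¹ * mu) ∧
      φ (Hb k n p lam mu) = ν • Hb k n p 1 (lam⁻¹ * mu) ∧
      φ.symm (Hg k n p 1 (lam⁻¹ * mu)) = Hg k n p lam mu ∧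
      φ.symm (Ha k n p 1 (lam⁻¹ * mu)) = ν⁻¹ • Ha k n p lam mu ∧
      φ.symm (Hb k n p 1 (lam⁻¹ * mu)) = ν⁻¹ • Hb k n p lam mu := by
  have hν0 : ν ≠ 0 := by
    intro h; apply hlam; rw [← hν, h, zero_pow]; omega
  have hl : ν ^ p * 1 = lam := by rw [mul_one, hν]
  have hm : ν ^ p * (lam⁻¹ * mu) = mu := by
    rw [hν, ← mul_assoc, mul_inv_cancel₀ hlam, one_mul]
  have hl' : (ν⁻¹) ^ p * lam = 1 := by
    rw [inv_pow, hν, inv_mul_cancel₀ hlam]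
  have hm' : (ν⁻¹) ^ p * mu = lam⁻¹ * mu := by rw [inv_pow, hν]
  have hcd : ν * ν⁻¹ = 1 := mul_inv_cancel₀ hν0
  have hdc : ν⁻¹ * ν = 1 := inv_mul_cancel₀ hν0
  refine ⟨AlgEquiv.ofAlgHom
    (scaleHom n p lam mu 1 (lam⁻¹ * mu) ν hl hm)
    (scaleHom n p 1 (lam⁻¹ * mu) lam mu ν⁻¹ hl' hm')
    (scaleHom_comp n p lam mu 1 (lam⁻¹ * mu) ν ν⁻¹ hl hm hl' hm' hcd)
    (scaleHom_comp n p 1 (lam⁻¹ * mu) lam mu ν⁻¹ ν hl' hm' hl hm hdc),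
    ?_, ?_, ?_, ?_, ?_, ?_⟩
  · exact scaleHom_Hg n p lam mu 1 (lam⁻¹ * mu) ν hl hm
  · exact scaleHom_Ha n p lam mu 1 (lam⁻¹ * mu) ν hl hm
  · exact scaleHom_Hb n p lam mu 1 (lam⁻¹ * mu) ν hl hm
  · exact scaleHom_Hg n p 1 (lam⁻¹ * mu) lam mu ν⁻¹ hl' hm'
  · exact scaleHom_Ha n p 1 (lam⁻¹ * mu) lam mu ν⁻¹ hl' hm'
  · exact scaleHom_Hb n p 1 (lam⁻¹ * mu) lam mu ν⁻¹ hl' hm'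
end

section
/- Let k be an algebraically closed field of characteristic p > 2, s ≥ 1, n = p^s, and λ, μ ∈ k. Then H(λ,μ) is a local ring, and its unique maximal (left) ideal is the kernel of the unique k-algebra homomorphism H(λ,μ) → k sending g ↦ 1, a ↦ 0, b ↦ 0. Consequently, up to isomorphism the only simple left H(λ,μ)-module is the one-dimensional module on which g acts as the identity and a and b act as zero. -/
/-!
The generator `a` is nilpotent and normal: it commutes with `g`, and `a * b = (b - a / 2) * a`,
so `H * a` is a two-sided nil ideal. Modulo `a` the generators `g` and `b` commute, so
`H ⧸ H * a` is commutative, and there `g - 1` and `b` are nilpotent: in characteristic `p`,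
`(g - 1) ^ p ^ s = g ^ p ^ s - 1 = 0`, and `b ^ p = μ (1 - g ^ p)`. Hence `h - ε h` is nilpotent
modulo `a`, so nilpotent, for every `h`, where `ε` is the counit. Thus every element outside
`ker ε` is a unit, and `ker ε` is the only maximal left ideal.
-/

section General

variable {k R : Type*} [CommRing k] [Ring R] [Algebra k R]

theorem Ideal.isTwoSided_span_singleton {x : R} (h : ∀ r, x * r ∈ Ideal.span {x}) :
    (Ideal.span {x}).IsTwoSided where
  mul_mem_of_left r hy := by
    obtain ⟨t, rfl⟩ := Ideal.mem_span_singleton'.1 hy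
    rw [mul_assoc]
    exact Ideal.mul_mem_left _ t (h r)

theorem isNilpotent_of_isNilpotent_mk_span_singleton {x y : R} [(Ideal.span {x}).IsTwoSided]
    (hx : IsNilpotent x) (hy : IsNilpotent (Ideal.Quotient.mk (Ideal.span {x}) y)) :
    IsNilpotent y := by
  obtain ⟨N, hN⟩ := hy
  obtain ⟨M, hM⟩ := hx
  rw [← map_pow, Ideal.Quotient.eq_zero_iff_mem] at hN
  have hpow := Ideal.pow_mem_pow hN M
  rw [Ideal.span_singleton_pow, hM, Ideal.span_singleton_eq_bot.2 rfl, Ideal.mem_bot,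
    ← pow_mul] at hpow
  exact ⟨N * M, hpow⟩

theorem isNilpotent_sub_algebraMap_of_adjoin_eq_top (φ : R →ₐ[k] k) {s : Set R}
    (hs : Algebra.adjoin k s = ⊤) (hcomm : ∀ x ∈ s, ∀ y ∈ s, Commute x y)
    (hnil : ∀ x ∈ s, IsNilpotent (x - algebraMap k R (φ x))) (x : R) :
    IsNilpotent (x - algebraMap k R (φ x)) := by
  have hmem : ∀ y : R, y ∈ Algebra.adjoin k s := fun y => hs ▸ Algebra.mem_top
  have hall : ∀ y z : R, Commute y z := fun y z =>
    Algebra.commute_of_mem_adjoin_of_forall_mem_commute (hmem z) fun w hw =>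
      (Algebra.commute_of_mem_adjoin_of_forall_mem_commute (hmem y) (hcomm w hw)).symm
  induction hmem x using Algebra.adjoin_induction with
  | mem y hy => exact hnil y hy
  | algebraMap r => simp
  | add y z _ _ hy hz =>
    rw [map_add, map_add, add_sub_add_comm]
    exact (hall _ _).isNilpotent_add hy hz
  | mul y z _ _ hy hz =>
    have : y * z - algebraMap k R (φ (y * z)) =
        (y - algebraMap k R (φ y)) * z + algebraMap k R (φ y) * (z - algebraMap k R (φ z)) := by
      rw [map_mul, map_mul]; noncomm_ring
    rw [this]
    exact (hall _ _).isNilpotent_add ((hall _ _).isNilpotent_mul_right hy)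
      ((hall _ _).isNilpotent_mul_left hz)

theorem isLocalHom_of_isNilpotent_sub_algebraMap {K : Type*} [Field K] [Algebra K R]
    (φ : R →ₐ[K] K) (h : ∀ x, IsNilpotent (x - algebraMap K R (φ x))) :
    IsLocalHom (φ : R →+* K) where
  map_nonunit x hx := by
    simpa using (h x).isUnit_add_left_of_commute (hx.map (algebraMap K R))
      (Algebra.commutes _ _).symm

theorem Ideal.IsMaximal.eq_ker_of_isLocalHom {K : Type*} [DivisionRing K] (f : R →+* K)
    [IsLocalHom f] {I : Ideal R} (hI : I.IsMaximal) : I = RingHom.ker f := by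
  refine hI.eq_of_le (RingHom.ker_ne_top f) fun x hx => ?_
  by_contra hfx
  exact hI.ne_top (I.eq_top_of_isUnit_mem hx (IsUnit.of_map f x (Ne.isUnit hfx)))

end General

namespace HAlg

variable {k : Type*} [Field k] {n p : ℕ} {lam mu : k}

local notation "H" => HAlg k n p lam mu
local notation "g" => Hg k n p lam mu
local notation "a" => Ha k n p lam mu
local notation "b" => Hb k n p lam mu

theorem Hg_pow : g ^ n = 1 := by
  simpa [Hg] using RingQuot.mkAlgHom_rel k (s := HRel k n p lam mu) HRel.gn

theorem Ha_mul_Hg : a * g = g * a := by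
  simpa [Hg, Ha] using RingQuot.mkAlgHom_rel k (s := HRel k n p lam mu) HRel.ag

theorem Hb_mul_Hg : b * g = g * a + g * b := by
  simpa [Hg, Ha, Hb] using RingQuot.mkAlgHom_rel k (s := HRel k n p lam mu) HRel.bg

theorem Ha_pow : a ^ p = algebraMap k H lam * (1 - g ^ p) := by
  simpa [Hg, Ha] using RingQuot.mkAlgHom_rel k (s := HRel k n p lam mu) HRel.ap

theorem Hb_pow : b ^ p = algebraMap k H mu * (1 - g ^ p) := by
  simpa [Hg, Hb] using RingQuot.mkAlgHom_rel k (s := HRel k n p lam mu) HRel.bp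

theorem Hb_mul_Ha : b * a = a * b + algebraMap k H (1 / 2) * a ^ 2 := by
  have h := RingQuot.mkAlgHom_rel k (s := HRel k n p lam mu) HRel.ba
  simp only [map_mul, map_add, map_pow, AlgHom.commutes] at h
  exact h

theorem adjoin_eq_top : Algebra.adjoin k {g, a, b} = ⊤ := by
  rw [eq_top_iff]
  rintro h -
  obtain ⟨w, rfl⟩ := RingQuot.mkAlgHom_surjective k (HRel k n p lam mu) h
  induction w using FreeAlgebra.induction with
  | grade0 r => rw [AlgHom.commutes]; exact Subalgebra.algebraMap_mem _ r
  | grade1 i => fin_cases i <;> exact Algebra.subset_adjoin (by simp [Hg, Ha, Hb])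
  | mul u v hu hv => rw [map_mul]; exact Subalgebra.mul_mem _ hu hv
  | add u v hu hv => rw [map_add]; exact Subalgebra.add_mem _ hu hv

theorem algHom_ext {A : Type*} [Semiring A] [Algebra k A] {f f' : H →ₐ[k] A}
    (hg : f g = f' g) (ha : f a = f' a) (hb : f b = f' b) : f = f' :=
  AlgHom.ext_of_adjoin_eq_top adjoin_eq_top <| by
    rintro x (rfl | rfl | rfl) <;> assumption

noncomputable def counit (hp : p ≠ 0) : H →ₐ[k] k :=
  RingQuot.liftAlgHom k ⟨FreeAlgebra.lift k ![1, 0, 0], fun _ _ h => by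
    cases h <;> simp [zero_pow hp]⟩

theorem counit_Hg (hp : p ≠ 0) : counit hp g = 1 := by simp [counit, Hg]

theorem counit_Ha (hp : p ≠ 0) : counit hp a = 0 := by simp [counit, Ha]

theorem counit_Hb (hp : p ≠ 0) : counit hp b = 0 := by simp [counit, Hb]

section CharP

variable [Fact p.Prime] [CharP k p] {s : ℕ}

theorem isNilpotent_Hg_pow_sub_one (hn : n = p ^ s) (m : ℕ) : IsNilpotent (g ^ m - 1) := by
  have : Nontrivial H := (counit (NeZero.ne p)).domain_nontrivial
  have : CharP H p := charP_of_injective_algebraMap (algebraMap k H).injective p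
  refine ⟨p ^ s, ?_⟩
  rw [sub_pow_char_pow_of_commute p s (Commute.one_right _), one_pow, ← pow_mul, mul_comm,
    pow_mul, ← hn, Hg_pow, one_pow, sub_self]

theorem isNilpotent_algebraMap_mul_one_sub_Hg_pow (hn : n = p ^ s) (c : k) :
    IsNilpotent (algebraMap k H c * (1 - g ^ p)) := by
  rw [← neg_sub]
  exact (Algebra.commute_algebraMap_left c _).isNilpotent_mul_left
    (isNilpotent_Hg_pow_sub_one hn p).neg

theorem isNilpotent_Ha (hn : n = p ^ s) : IsNilpotent a :=
  (IsNilpotent.pow_iff_pos (NeZero.ne p)).1 <| by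
    rw [Ha_pow]; exact isNilpotent_algebraMap_mul_one_sub_Hg_pow hn lam

theorem isNilpotent_Hb (hn : n = p ^ s) : IsNilpotent b :=
  (IsNilpotent.pow_iff_pos (NeZero.ne p)).1 <| by
    rw [Hb_pow]; exact isNilpotent_algebraMap_mul_one_sub_Hg_pow hn mu

end CharP

theorem Ha_mul_mem_span_Ha (h : H) : a * h ∈ Ideal.span {a} := by
  have hh : h ∈ Algebra.adjoin k {g, a, b} := by rw [adjoin_eq_top]; exact Algebra.mem_top
  simp_rw [Ideal.mem_span_singleton']
  induction hh using Algebra.adjoin_induction with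
  | mem x hx =>
    rcases hx with rfl | rfl | rfl
    · exact ⟨g, Ha_mul_Hg.symm⟩
    · exact ⟨a, rfl⟩
    · refine ⟨b - algebraMap k H (1 / 2) * a, ?_⟩
      rw [sub_mul, Hb_mul_Ha, mul_assoc, ← sq]
      abel
  | algebraMap r => exact ⟨algebraMap k H r, Algebra.commutes r a⟩
  | add x y _ _ hx hy =>
    obtain ⟨x', hx⟩ := hx
    obtain ⟨y', hy⟩ := hy
    exact ⟨x' + y', by rw [add_mul, hx, hy, mul_add]⟩
  | mul x y _ _ hx hy =>
    obtain ⟨x', hx⟩ := hx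
    obtain ⟨y', hy⟩ := hy
    exact ⟨x' * y', by rw [mul_assoc, hy, ← mul_assoc, hx, mul_assoc]⟩

instance : (Ideal.span {a}).IsTwoSided :=
  Ideal.isTwoSided_span_singleton Ha_mul_mem_span_Ha

theorem commute_mk_Hg_mk_Hb :
    Commute (Ideal.Quotient.mk (Ideal.span {a}) g) (Ideal.Quotient.mk (Ideal.span {a}) b) := by
  rw [Commute, SemiconjBy, ← map_mul, ← map_mul, Hb_mul_Hg, map_add, map_mul _ g a,
    Ideal.Quotient.mk_singleton_self, mul_zero, zero_add]

theorem isNilpotent_sub_algebraMap_counit [Fact p.Prime] [CharP k p] {s : ℕ} (hn : n = p ^ s)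
    (h : H) : IsNilpotent (h - algebraMap k H (counit (NeZero.ne p) h)) := by
  set ε := counit (k := k) (n := n) (lam := lam) (mu := mu) (NeZero.ne p)
  set I := Ideal.span {a}
  let π := Ideal.Quotient.mkₐ k I
  have hπa : π a = 0 := Ideal.Quotient.mk_singleton_self a
  let ε' := Ideal.Quotient.liftₐ I ε fun x hx => by
    obtain ⟨t, rfl⟩ := Ideal.mem_span_singleton'.1 hx
    rw [map_mul, counit_Ha, mul_zero]
  have hε' : ∀ x, ε' (π x) = ε x := fun x => rfl
  have hadjoin : Algebra.adjoin k (π '' {g, a, b}) = ⊤ := by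
    rw [Algebra.adjoin_image, adjoin_eq_top, Algebra.map_top, AlgHom.range_eq_top]
    exact Ideal.Quotient.mkₐ_surjective k I
  have hcomm : ∀ x ∈ π '' {g, a, b}, ∀ y ∈ π '' {g, a, b}, Commute x y := by
    simp only [Set.image_insert_eq, Set.image_singleton, hπa, Set.mem_insert_iff,
      Set.mem_singleton_iff]
    rintro x (rfl | rfl | rfl) y (rfl | rfl | rfl)
    all_goals first
      | exact Commute.refl _ | exact Commute.zero_left _ | exact Commute.zero_right _
      | exact commute_mk_Hg_mk_Hb | exact commute_mk_Hg_mk_Hb.symm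
  have hnil : ∀ x ∈ π '' {g, a, b}, IsNilpotent (x - algebraMap k (H ⧸ I) (ε' x)) := by
    simp only [Set.image_insert_eq, Set.image_singleton, Set.mem_insert_iff,
      Set.mem_singleton_iff]
    rintro x (rfl | rfl | rfl) <;> rw [hε']
    · rw [counit_Hg, map_one, ← map_one π, ← map_sub, ← pow_one g]
      exact (isNilpotent_Hg_pow_sub_one hn 1).map π
    · rw [counit_Ha, map_zero, sub_zero]; exact (isNilpotent_Ha hn).map π
    · rw [counit_Hb, map_zero, sub_zero]; exact (isNilpotent_Hb hn).map π
  have key := isNilpotent_sub_algebraMap_of_adjoin_eq_top ε' hadjoin hcomm hnil (π h)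
  rw [hε', ← AlgHom.commutes π, ← map_sub, Ideal.Quotient.mkₐ_eq_mk] at key
  exact isNilpotent_of_isNilpotent_mk_span_singleton (isNilpotent_Ha hn) key

end HAlg

theorem stmt9_general {k : Type*} [Field k] (p : ℕ) [CharP k p] (hp : 2 < p)
    (s : ℕ) (lam mu : k) :
    IsLocalRing (HAlg k (p ^ s) p lam mu) ∧
    (∃! f : HAlg k (p ^ s) p lam mu →ₐ[k] k,
      f (Hg k (p ^ s) p lam mu) = 1 ∧ f (Ha k (p ^ s) p lam mu) = 0 ∧
        f (Hb k (p ^ s) p lam mu) = 0) ∧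
    (∀ f : HAlg k (p ^ s) p lam mu →ₐ[k] k,
      f (Hg k (p ^ s) p lam mu) = 1 → f (Ha k (p ^ s) p lam mu) = 0 →
      f (Hb k (p ^ s) p lam mu) = 0 →
        (∀ I : Ideal (HAlg k (p ^ s) p lam mu), I.IsMaximal →
          I = RingHom.ker (f : HAlg k (p ^ s) p lam mu →+* k)) ∧
        (∀ (M : Type) [AddCommGroup M] [Module (HAlg k (p ^ s) p lam mu) M],
          IsSimpleModule (HAlg k (p ^ s) p lam mu) M →
          Nonempty (M ≃ₗ[HAlg k (p ^ s) p lam mu]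
            (HAlg k (p ^ s) p lam mu ⧸
              RingHom.ker (f : HAlg k (p ^ s) p lam mu →+* k))))) := by
  have : Fact p.Prime := ⟨(CharP.char_is_prime_or_zero k p).resolve_right (by omega)⟩
  set ε := HAlg.counit (k := k) (n := p ^ s) (lam := lam) (mu := mu) (NeZero.ne p)
  have hε : ε (Hg k (p ^ s) p lam mu) = 1 ∧ ε (Ha k (p ^ s) p lam mu) = 0 ∧
      ε (Hb k (p ^ s) p lam mu) = 0 :=
    ⟨HAlg.counit_Hg _, HAlg.counit_Ha _, HAlg.counit_Hb _⟩
  have hunique : ∀ f : HAlg k (p ^ s) p lam mu →ₐ[k] k, f (Hg k (p ^ s) p lam mu) = 1 →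
      f (Ha k (p ^ s) p lam mu) = 0 → f (Hb k (p ^ s) p lam mu) = 0 → f = ε :=
    fun f hg ha hb => HAlg.algHom_ext (hg.trans hε.1.symm) (ha.trans hε.2.1.symm)
      (hb.trans hε.2.2.symm)
  have : IsLocalHom (ε : HAlg k (p ^ s) p lam mu →+* k) :=
    isLocalHom_of_isNilpotent_sub_algebraMap ε (HAlg.isNilpotent_sub_algebraMap_counit rfl)
  refine ⟨(ε : HAlg k (p ^ s) p lam mu →+* k).domain_isLocalRing,
    ⟨ε, hε, fun f hf => hunique f hf.1 hf.2.1 hf.2.2⟩, fun f hg ha hb => ?_⟩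
  obtain rfl := hunique f hg ha hb
  have hmax (I : Ideal (HAlg k (p ^ s) p lam mu)) (hI : I.IsMaximal) :
      I = RingHom.ker (ε : HAlg k (p ^ s) p lam mu →+* k) :=
    hI.eq_ker_of_isLocalHom _
  refine ⟨hmax, fun M _ _ hM => ?_⟩
  obtain ⟨I, hI, ⟨e⟩⟩ := isSimpleModule_iff_quot_maximal.1 hM
  exact ⟨hmax I hI ▸ e⟩

/-- For `k` algebraically closed of characteristic `p > 2` and `n = p^s`
(`s ≥ 1`), `H(λ,μ)` is a local ring; there is a unique `k`-algebra homomorphism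
`f : H(λ,μ) → k` with `f(g) = 1`, `f(a) = 0`, `f(b) = 0`; its kernel is the unique
maximal (left) ideal; and every simple left `H(λ,μ)`-module is isomorphic to the
corresponding one-dimensional module `H(λ,μ) ⧸ ker f` (on which `g` acts as the identity
and `a`, `b` act as zero). -/
theorem stmt9 {k : Type*} [Field k] [IsAlgClosed k] (p : ℕ) [CharP k p] (hp : 2 < p)
    (s : ℕ) (hs : 1 ≤ s) (lam mu : k) :
    IsLocalRing (HAlg k (p ^ s) p lam mu) ∧
    (∃! f : HAlg k (p ^ s) p lam mu →ₐ[k] k,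
      f (Hg k (p ^ s) p lam mu) = 1 ∧ f (Ha k (p ^ s) p lam mu) = 0 ∧
        f (Hb k (p ^ s) p lam mu) = 0) ∧
    (∀ f : HAlg k (p ^ s) p lam mu →ₐ[k] k,
      f (Hg k (p ^ s) p lam mu) = 1 → f (Ha k (p ^ s) p lam mu) = 0 →
      f (Hb k (p ^ s) p lam mu) = 0 →
        (∀ I : Ideal (HAlg k (p ^ s) p lam mu), I.IsMaximal →
          I = RingHom.ker (f : HAlg k (p ^ s) p lam mu →+* k)) ∧
        (∀ (M : Type) [AddCommGroup M] [Module (HAlg k (p ^ s) p lam mu) M],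
          IsSimpleModule (HAlg k (p ^ s) p lam mu) M →
          Nonempty (M ≃ₗ[HAlg k (p ^ s) p lam mu]
            (HAlg k (p ^ s) p lam mu ⧸
              RingHom.ker (f : HAlg k (p ^ s) p lam mu →+* k))))) :=
  stmt9_general p hp s lam mu
end

section
/- Let k be an algebraically closed field of characteristic p > 2, n = p^s·t with s ≥ 1 and p ∤ t, ξ a primitive t-th root of unity in k, μ ∈ k, and let ν ∈ k be the unique element with ν^p = μ. Then the k-algebra homomorphisms H(0,μ) → k are exactly the t maps ρ_i, 0 ≤ i ≤ t−1, determined by ρ_i(g) = ξ^i, ρ_i(a) = 0 and ρ_i(b) = ν(1 − ξ^i); in particular these t maps exist, are pairwise distinct, and every algebra homomorphism H(0,μ) → k equals some ρ_i. -/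
/-- Algebra homomorphisms out of `HAlg` are determined by the images of the generators. -/
lemma HAlg.hom_ext {k : Type*} [Field k] {n p : ℕ} {lam mu : k}
    (ρ ρ' : HAlg k n p lam mu →ₐ[k] k)
    (h0 : ρ (Hg k n p lam mu) = ρ' (Hg k n p lam mu))
    (h1 : ρ (Ha k n p lam mu) = ρ' (Ha k n p lam mu))
    (h2 : ρ (Hb k n p lam mu) = ρ' (Hb k n p lam mu)) : ρ = ρ' := by
  have key : ρ.comp (RingQuot.mkAlgHom k (HRel k n p lam mu))
      = ρ'.comp (RingQuot.mkAlgHom k (HRel k n p lam mu)) := by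
    apply FreeAlgebra.hom_ext
    funext i
    rcases i with ⟨(_ | _ | _ | m), hm⟩
    · exact h0
    · exact h1
    · exact h2
    · exact absurd hm (by omega)
  ext x
  simpa using DFunLike.congr_fun key (FreeAlgebra.ι k x)

/-- Existence of the algebra homomorphism `ρ` with prescribed values on the generators. -/
lemma HAlg.exists_hom {k : Type*} [Field k] (p : ℕ) [hpf : Fact p.Prime] [CharP k p]
    (n : ℕ) (mu ν γ : k) (hν : ν ^ p = mu) (hγ : γ ^ n = 1) :
    ∃ ρ : HAlg k n p 0 mu →ₐ[k] k,
      ρ (Hg k n p 0 mu) = γ ∧ ρ (Ha k n p 0 mu) = 0 ∧ ρ (Hb k n p 0 mu) = ν * (1 - γ) := by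
  set f : FreeAlgebra k (Fin 3) →ₐ[k] k := FreeAlgebra.lift k ![γ, 0, ν * (1 - γ)] with hf
  have hcomp : ∀ x y, HRel k n p 0 mu x y → f x = f y := by
    rintro x y h
    cases h with
    | gn => simp [hf, FreeAlgebra.lift_ι_apply, hγ]
    | ag => simp [hf, FreeAlgebra.lift_ι_apply]
    | bg =>
        simp only [map_mul, map_add, hf, FreeAlgebra.lift_ι_apply]
        norm_num [Matrix.cons_val_zero, Matrix.cons_val_one, Matrix.head_cons]
        ring
    | ap => simp [hf, FreeAlgebra.lift_ι_apply, zero_pow hpf.out.pos.ne']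
    | bp =>
        simp only [map_pow, map_mul, map_sub, map_one, AlgHom.commutes,
          Algebra.algebraMap_self_apply, hf, FreeAlgebra.lift_ι_apply, Matrix.cons_val_zero,
          Matrix.cons_val_two, Matrix.tail_cons, Matrix.head_cons]
        rw [mul_pow, hν, sub_pow_char, one_pow]
    | ba => simp [hf, FreeAlgebra.lift_ι_apply]
  refine ⟨RingQuot.liftAlgHom k ⟨f, hcomp⟩, ?_, ?_, ?_⟩ <;>
    simp [Hg, Ha, Hb, RingQuot.liftAlgHom_mkAlgHom_apply, hf, FreeAlgebra.lift_ι_apply]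

/-- For `k` algebraically closed of characteristic `p > 2`,
`n = p^s·t` with `s ≥ 1`, `p ∤ t`, `ξ` a primitive `t`-th root of unity and `ν^p = μ`,
the `k`-algebra homomorphisms `H(0,μ) → k` are exactly the `t` maps `ρ_i` (`0 ≤ i < t`)
with `ρ_i(g) = ξ^i`, `ρ_i(a) = 0`, `ρ_i(b) = ν(1 - ξ^i)`: each such map exists and is
unique, distinct indices give distinct maps, and every algebra homomorphism to `k` is of
this form. -/
theorem stmt10 {k : Type*} [Field k] [IsAlgClosed k] (p : ℕ) [CharP k p] (hp : 2 < p)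
    (s t : ℕ) (hs : 1 ≤ s) (hpt : ¬ p ∣ t)
    (ξ : k) (hξ : IsPrimitiveRoot ξ t) (mu ν : k) (hν : ν ^ p = mu) :
    (∀ i : ℕ, i < t →
      ∃! ρ : HAlg k (p ^ s * t) p 0 mu →ₐ[k] k,
        ρ (Hg k (p ^ s * t) p 0 mu) = ξ ^ i ∧ ρ (Ha k (p ^ s * t) p 0 mu) = 0 ∧
          ρ (Hb k (p ^ s * t) p 0 mu) = ν * (1 - ξ ^ i)) ∧
    (∀ i j : ℕ, i < t → j < t →
      ∀ ρ : HAlg k (p ^ s * t) p 0 mu →ₐ[k] k,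
        (ρ (Hg k (p ^ s * t) p 0 mu) = ξ ^ i ∧ ρ (Ha k (p ^ s * t) p 0 mu) = 0 ∧
          ρ (Hb k (p ^ s * t) p 0 mu) = ν * (1 - ξ ^ i)) →
        (ρ (Hg k (p ^ s * t) p 0 mu) = ξ ^ j ∧ ρ (Ha k (p ^ s * t) p 0 mu) = 0 ∧
          ρ (Hb k (p ^ s * t) p 0 mu) = ν * (1 - ξ ^ j)) →
        i = j) ∧
    (∀ ρ : HAlg k (p ^ s * t) p 0 mu →ₐ[k] k,
      ∃ i : ℕ, i < t ∧
        ρ (Hg k (p ^ s * t) p 0 mu) = ξ ^ i ∧ ρ (Ha k (p ^ s * t) p 0 mu) = 0 ∧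
          ρ (Hb k (p ^ s * t) p 0 mu) = ν * (1 - ξ ^ i)) := by

  have hp' : p.Prime := (CharP.char_is_prime_or_zero k p).resolve_right (by omega)
  haveI : Fact p.Prime := ⟨hp'⟩
  have ht0 : 0 < t := Nat.pos_of_ne_zero fun h => hpt (h ▸ dvd_zero p)
  haveI : NeZero t := ⟨ht0.ne'⟩
  set n := p ^ s * t with hn
  -- every algebra hom satisfies the relations
  have key : ∀ ρ : HAlg k n p 0 mu →ₐ[k] k,
      (ρ (Hg k n p 0 mu)) ^ n = 1 ∧ ρ (Ha k n p 0 mu) = 0 ∧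
        ρ (Hb k n p 0 mu) = ν * (1 - ρ (Hg k n p 0 mu)) := by
    intro ρ
    have rg := congrArg ρ (RingQuot.mkAlgHom_rel k (HRel.gn (k := k) (n := n) (p := p)
      (lam := 0) (mu := mu)))
    have ra := congrArg ρ (RingQuot.mkAlgHom_rel k (HRel.ap (k := k) (n := n) (p := p)
      (lam := 0) (mu := mu)))
    have rb := congrArg ρ (RingQuot.mkAlgHom_rel k (HRel.bp (k := k) (n := n) (p := p)
      (lam := 0) (mu := mu)))
    simp only [map_pow, map_mul, map_one, map_sub, map_zero, AlgHom.commutes,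
      Algebra.algebraMap_self_apply, zero_mul] at rg ra rb
    refine ⟨by simpa [Hg] using rg, ?_, ?_⟩
    · have : (ρ (Ha k n p 0 mu)) ^ p = 0 := by simpa [Ha] using ra
      exact pow_eq_zero_iff hp'.pos.ne' |>.mp this
    · have hb : (ρ (Hb k n p 0 mu)) ^ p = mu * (1 - (ρ (Hg k n p 0 mu)) ^ p) := by
        simpa [Hb, Hg] using rb
      have : (ρ (Hb k n p 0 mu)) ^ p = (ν * (1 - ρ (Hg k n p 0 mu))) ^ p := by
        rw [hb, mul_pow, hν, sub_pow_char, one_pow]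
      exact frobenius_inj k p (by simpa [frobenius_def] using this)
  have gpow : ∀ ρ : HAlg k n p 0 mu →ₐ[k] k, (ρ (Hg k n p 0 mu)) ^ t = 1 := by
    intro ρ
    have h1 := (key ρ).1
    have h2 : ((ρ (Hg k n p 0 mu)) ^ t - 1) ^ p ^ s = 0 := by
      rw [sub_pow_char_pow, one_pow, ← pow_mul, mul_comm t (p ^ s), h1, sub_self]
    have := pow_eq_zero_iff (pow_ne_zero s hp'.pos.ne') |>.mp h2
    exact sub_eq_zero.mp this
  refine ⟨?_, ?_, ?_⟩
  · intro i hi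
    have hγ : (ξ ^ i) ^ n = 1 := by
      rw [← pow_mul, hn, show i * (p ^ s * t) = t * (i * p ^ s) by ring, pow_mul,
        hξ.pow_eq_one, one_pow]
    obtain ⟨ρ, h0, h1, h2⟩ := HAlg.exists_hom p n mu ν (ξ ^ i) hν hγ
    refine ⟨ρ, ⟨h0, h1, h2⟩, fun ρ' ⟨h0', h1', h2'⟩ => ?_⟩
    exact HAlg.hom_ext ρ' ρ (by rw [h0, h0']) (by rw [h1, h1']) (by rw [h2, h2'])
  · intro i j hi hj ρ ⟨h0i, _, _⟩ ⟨h0j, _, _⟩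
    exact hξ.pow_inj hi hj (h0i ▸ h0j)
  · intro ρ
    obtain ⟨hgn, ha, hb⟩ := key ρ
    obtain ⟨i, hi, hpow⟩ := hξ.eq_pow_of_pow_eq_one (gpow ρ)
    exact ⟨i, hi, hpow.symm, ha, by rw [hb, hpow]⟩
end

section
/- Let k be a field of characteristic p > 2, n a positive integer divisible by p, λ, μ ∈ k, A an associative unital k-algebra containing elements g, a, b satisfying the H(λ,μ)-relations, and M a left A-module. Suppose 0 ≠ v ∈ M satisfies g·v = αv and a·v = βv for some α, β ∈ k with β ≠ 0. Then the p vectors v, b·v, b²·v, …, b^{p−1}·v are linearly independent over k. -/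
/-- Over a field of char `p > 2`, with `g, a, b ∈ A` satisfying the
`H(λ,μ)`-relations, if a module `M` contains `v ≠ 0` with `g•v = α•v` and `a•v = β•v`
for some scalars with `β ≠ 0`, then `v, b•v, …, b^(p-1)•v` are linearly independent. -/
theorem stmt12 {k : Type*} [Field k] (p : ℕ) [CharP k p] (hp : 2 < p)
    (n : ℕ) (hn : 0 < n) (hpn : p ∣ n) (lam mu : k)
    {A : Type*} [Ring A] [Algebra k A] (g a b : A)
    (hgn : g ^ n = 1) (hag : a * g = g * a) (hbg : b * g = g * a + g * b)
    (hap : a ^ p = lam • ((1 : A) - g ^ p)) (hbp : b ^ p = mu • ((1 : A) - g ^ p))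
    (hba : b * a = a * b + (1 / 2 : k) • a ^ 2)
    {M : Type*} [AddCommGroup M] [Module k M] [Module A M] [IsScalarTower k A M]
    (v : M) (hv : v ≠ 0) (α β : k) (hβ : β ≠ 0)
    (hgv : g • v = α • v) (hav : a • v = β • v) :
    LinearIndependent k (fun i : Fin p => (b ^ (i : ℕ)) • v) := by
  classical
  have htwo : (2 : k) ≠ 0 := by
    intro h
    have hd := (CharP.cast_eq_zero_iff k p 2).mp h
    have := Nat.le_of_dvd (by norm_num) hd
    omega
  set aL : M →ₗ[k] M :=
    { toFun := fun m => a • m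
      map_add' := fun x y => smul_add a x y
      map_smul' := fun c x => smul_comm a c x } with haL
  set bL : M →ₗ[k] M :=
    { toFun := fun m => b • m
      map_add' := fun x y => smul_add b x y
      map_smul' := fun c x => smul_comm b c x } with hbL
  set u : ℕ → M := fun j => (b ^ j) • v with hu
  have hu0 : u 0 = v := by simp [hu]
  have hsucc : ∀ j, u (j + 1) = bL (u j) := by
    intro j
    simp only [hu, hbL, LinearMap.coe_mk, AddHom.coe_mk, pow_succ', mul_smul]
  have hav0 : aL (u 0) = β • u 0 := by
    simp only [haL, LinearMap.coe_mk, AddHom.coe_mk, hu0, hav]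
  have haU : ∀ m : M, aL (bL m) = bL (aL m) - (1/2 : k) • aL (aL m) := by
    intro m
    have hab : a * b = b * a - (1/2 : k) • a ^ 2 := by
      rw [hba]; exact (add_sub_cancel_right _ _).symm
    have h3 : (a * b) • m = (b * a) • m - ((1/2 : k) • a ^ 2) • m := by
      rw [hab, sub_smul]
    simpa only [haL, hbL, LinearMap.coe_mk, AddHom.coe_mk, mul_smul, smul_assoc,
      sq] using h3
  -- make the goal refer to `u`, then forget the definitions
  rw [show (fun i : Fin p => (b ^ (i : ℕ)) • v) = (fun i : Fin p => u i) from rfl]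
  clear haL hbL hu hav hgv hba hap hbp hbg hag hgn
  clear_value aL bL u
  clear a b g
  set S : ℕ → Submodule k M := fun m => Submodule.span k (u '' Set.Iio m) with hS
  have Smono : ∀ {m m' : ℕ}, m ≤ m' → S m ≤ S m' := by
    intro m m' h
    exact Submodule.span_mono (Set.image_mono (Set.Iio_subset_Iio h))
  have umem : ∀ {t m : ℕ}, t < m → u t ∈ S m := by
    intro t m h
    exact Submodule.subset_span ⟨t, h, rfl⟩
  have hS0 : S 0 = ⊥ := by
    rw [hS]
    have : u '' Set.Iio 0 = ∅ := by
      ext x; simp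
    simp [this]
  have bS : ∀ j, ∀ x ∈ S j, bL x ∈ S (j + 1) := by
    intro j x hx
    have hx' : x ∈ Submodule.span k (u '' Set.Iio j) := hx
    clear hx
    induction hx' using Submodule.span_induction with
    | mem y hy =>
      obtain ⟨t, ht, rfl⟩ := hy
      rw [← hsucc]
      exact umem (Nat.succ_lt_succ ht)
    | zero => rw [map_zero]; exact zero_mem _
    | add x y hx hy ihx ihy => rw [map_add]; exact add_mem ihx ihy
    | smul c x hx ihx => rw [map_smul]; exact Submodule.smul_mem _ c ihx
  -- key structural lemma
  have H : ∀ j : ℕ, ∃ w ∈ S j,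
      aL (u (j + 1)) = β • u (j + 1) - ((((j : k) + 1) / 2) * β ^ 2) • u j + w := by
    intro j
    induction j using Nat.strong_induction_on with
    | _ j IH =>
      have aS : ∀ t, t ≤ j → ∀ x ∈ S t, aL x ∈ S t := by
        intro t ht x hx
        have hx' : x ∈ Submodule.span k (u '' Set.Iio t) := hx
        clear hx
        induction hx' using Submodule.span_induction with
        | mem y hy =>
          obtain ⟨s, hs, rfl⟩ := hy
          have hs : s < t := hs
          match s, hs with
          | 0, hs =>
            rw [hav0]
            exact Submodule.smul_mem _ _ (umem hs)
          | s + 1, hs =>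
            obtain ⟨w, hw, hw2⟩ := IH s (by omega)
            rw [hw2]
            exact add_mem (sub_mem (Submodule.smul_mem _ _ (umem hs))
              (Submodule.smul_mem _ _ (umem (by omega)))) (Smono (by omega) hw)
        | zero => rw [map_zero]; exact zero_mem _
        | add x y hx hy ihx ihy => rw [map_add]; exact add_mem ihx ihy
        | smul c x hx ihx => rw [map_smul]; exact Submodule.smul_mem _ c ihx
      match j with
      | 0 =>
        refine ⟨0, zero_mem _, ?_⟩
        rw [hsucc 0, haU (u 0), hav0, map_smul, map_smul, hav0, add_zero]
        match_scalars <;> push_cast <;> ring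
      | t + 1 =>
        obtain ⟨w, hw, hw2⟩ := IH t (Nat.lt_succ_self t)
        have haut : aL (u t) ∈ S (t + 1) := by
          match t with
          | 0 =>
            rw [hav0]
            exact Submodule.smul_mem _ _ (umem (by omega))
          | s + 1 =>
            obtain ⟨w', hw', hw2'⟩ := IH s (by omega)
            rw [hw2']
            exact add_mem (sub_mem (Submodule.smul_mem _ _ (umem (by omega)))
              (Submodule.smul_mem _ _ (umem (by omega)))) (Smono (by omega) hw')
        have haw : aL w ∈ S t := aS t (Nat.le_succ t) w hw
        refine ⟨bL w - (1/2 : k) • (β • w - ((((t : k) + 1) / 2) * β ^ 2) • aL (u t)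
            + aL w - (β * ((((t : k) + 1) / 2) * β ^ 2)) • u t), ?_, ?_⟩
        · refine sub_mem (bS t w hw) (Submodule.smul_mem _ _ ?_)
          exact sub_mem (add_mem (sub_mem (Submodule.smul_mem _ _ (Smono (Nat.le_succ t) hw))
            (Submodule.smul_mem _ _ haut)) (Smono (Nat.le_succ t) haw))
            (Submodule.smul_mem _ _ (umem (by omega)))
        · have eb : bL (β • u (t + 1) - ((((t : k) + 1) / 2) * β ^ 2) • u t + w)
              = β • bL (u (t + 1)) - ((((t : k) + 1) / 2) * β ^ 2) • bL (u t) + bL w := by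
            rw [map_add, map_sub, map_smul, map_smul]
          have ea : aL (β • u (t + 1) - ((((t : k) + 1) / 2) * β ^ 2) • u t + w)
              = β • aL (u (t + 1)) - ((((t : k) + 1) / 2) * β ^ 2) • aL (u t) + aL w := by
            rw [map_add, map_sub, map_smul, map_smul]
          rw [hsucc (t + 1), haU (u (t + 1)), hw2, eb, ea, hw2, ← hsucc t]
          match_scalars <;> push_cast <;> ring
  -- `aL - β` maps `S (j+1)` into `S j`
  have TS : ∀ j, ∀ x ∈ S (j + 1), aL x - β • x ∈ S j := by
    intro j x hx
    have hx' : x ∈ Submodule.span k (u '' Set.Iio (j + 1)) := hx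
    clear hx
    induction hx' using Submodule.span_induction with
    | mem y hy =>
      obtain ⟨s, hs, rfl⟩ := hy
      have hs : s < j + 1 := hs
      match s, hs with
      | 0, hs =>
        rw [hav0, sub_self]
        exact zero_mem _
      | s + 1, hs =>
        obtain ⟨w, hw, hw2⟩ := H s
        rw [hw2]
        have e : β • u (s + 1) - ((((s : k) + 1) / 2) * β ^ 2) • u s + w - β • u (s + 1)
            = w - ((((s : k) + 1) / 2) * β ^ 2) • u s := by abel
        rw [e]
        exact sub_mem (Smono (by omega) hw) (Submodule.smul_mem _ _ (umem (by omega)))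
    | zero =>
      rw [map_zero, smul_zero, sub_self]
      exact zero_mem _
    | add x y hx hy ihx ihy =>
      have e : aL (x + y) - β • (x + y) = (aL x - β • x) + (aL y - β • y) := by
        rw [map_add, smul_add]; abel
      rw [e]; exact add_mem ihx ihy
    | smul c x hx ihx =>
      have e : aL (c • x) - β • (c • x) = c • (aL x - β • x) := by
        rw [map_smul, smul_sub, smul_comm β c x]
      rw [e]; exact Submodule.smul_mem _ c ihx
  -- `u m` is not in the span of the previous ones
  have R : ∀ m, m < p → u m ∉ S m := by
    intro m
    induction m with
    | zero =>
      intro _ hmem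
      rw [hS0, Submodule.mem_bot] at hmem
      exact hv (hu0 ▸ hmem)
    | succ m IH =>
      intro hm hmem
      obtain ⟨w, hw, hw2⟩ := H m
      have h1 : aL (u (m + 1)) - β • u (m + 1) ∈ S m := TS m _ hmem
      rw [hw2] at h1
      have e : β • u (m + 1) - ((((m : k) + 1) / 2) * β ^ 2) • u m + w - β • u (m + 1)
          = w - ((((m : k) + 1) / 2) * β ^ 2) • u m := by abel
      rw [e] at h1
      have h2 : ((((m : k) + 1) / 2) * β ^ 2) • u m ∈ S m := by
        have e2 : ((((m : k) + 1) / 2) * β ^ 2) • u m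
            = w - (w - ((((m : k) + 1) / 2) * β ^ 2) • u m) := by abel
        rw [e2]; exact sub_mem hw h1
      have hcne : ((((m : k) + 1) / 2) * β ^ 2) ≠ 0 := by
        have hm1 : ((m : k) + 1) ≠ 0 := by
          have hx : (((m + 1 : ℕ)) : k) ≠ 0 := by
            rw [Ne, CharP.cast_eq_zero_iff k p]
            intro hd
            have := Nat.le_of_dvd (by omega) hd
            omega
          push_cast at hx
          exact hx
        exact mul_ne_zero (div_ne_zero hm1 htwo) (pow_ne_zero _ hβ)
      have hmm : u m ∈ S m := by
        have h3 := Submodule.smul_mem (S m) ((((m : k) + 1) / 2) * β ^ 2)⁻¹ h2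
        rwa [smul_smul, inv_mul_cancel₀ hcne, one_smul] at h3
      exact IH (by omega) hmm
  -- assemble linear independence
  have LI : ∀ m, m ≤ p → LinearIndependent k (fun i : Fin m => u i) := by
    intro m
    induction m with
    | zero => intro _; exact linearIndependent_empty_type
    | succ m IH =>
      intro hm
      have h1 : (fun i : Fin (m + 1) => u i) = Fin.snoc (fun i : Fin m => u i) (u m) := by
        funext i
        refine Fin.lastCases ?_ ?_ i
        · simp
        · intro i; simp
      rw [h1, linearIndependent_fin_snoc]
      refine ⟨IH (by omega), ?_⟩
      have hrange : Set.range (fun i : Fin m => u i) = u '' Set.Iio m := by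
        ext x
        constructor
        · rintro ⟨i, rfl⟩; exact ⟨i, i.isLt, rfl⟩
        · rintro ⟨t, ht, rfl⟩; exact ⟨⟨t, ht⟩, rfl⟩
      rw [hrange]
      exact R m (by omega)
  exact LI p le_rfl
end

section
/- Let k be an algebraically closed field of characteristic p > 2, n a positive integer divisible by p, λ, μ ∈ k, A an associative unital k-algebra containing elements g, a, b satisfying the H(λ,μ)-relations, and M a left A-module. Suppose 0 ≠ v ∈ M satisfies g·v = αv and a·v = βv for some α, β ∈ k with β ≠ 0. Then N := span_k{v, b·v, …, b^{p−1}·v} is an A-submodule of M (where A acts through g, a, b and scalars); N is a simple A-module; and any w ∈ N with g·w ∈ kw and a·w ∈ kw is a scalar multiple of v. -/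
set_option linter.unusedSectionVars false
set_option maxHeartbeats 1000000

namespace Stmt13Aux

variable {k : Type*} [Field k] {A : Type*} [Ring A] [Algebra k A]
variable {M : Type*} [AddCommGroup M] [Module k M] [Module A M] [IsScalarTower k A M]

/-- k-scalars commute with the A-action. -/
theorem ksmul_comm (r : k) (x : A) (u : M) : x • (r • u) = r • (x • u) := by
  rw [← algebraMap_smul A r u, ← mul_smul, ← Algebra.commutes r x, mul_smul, algebraMap_smul]

variable (k) in
/-- Span of the first `m` vectors `b^i • v`. -/
def GG (b : A) (v : M) (m : ℕ) : Submodule k M :=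
  Submodule.span k ((fun i => (b ^ i) • v) '' Set.Iio m)

theorem GG_mono (b : A) (v : M) {m m' : ℕ} (h : m ≤ m') : GG k b v m ≤ GG k b v m' :=
  Submodule.span_mono (Set.image_mono (fun _ hi => lt_of_lt_of_le hi h))

theorem mem_GG (b : A) (v : M) {i m : ℕ} (h : i < m) : (b ^ i) • v ∈ GG k b v m :=
  Submodule.subset_span ⟨i, h, rfl⟩

theorem GG_zero (b : A) (v : M) : GG k b v 0 = ⊥ := by
  have : Set.Iio 0 = (∅ : Set ℕ) := by ext x; simp
  rw [GG, this, Set.image_empty, Submodule.span_empty]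

theorem GG_one (b : A) (v : M) : GG k b v 1 = Submodule.span k {v} := by
  have h1 : Set.Iio 1 = ({0} : Set ℕ) := by ext x; simp [Nat.lt_one_iff]
  rw [GG, h1, Set.image_singleton, pow_zero, one_smul]

theorem GG_succ (b : A) (v : M) (m : ℕ) :
    GG k b v (m + 1) = GG k b v m ⊔ Submodule.span k {(b ^ m) • v} := by
  have h1 : Set.Iio (m + 1) = insert m (Set.Iio m) := by
    ext x; simp only [Set.mem_Iio, Set.mem_insert_iff]; omega
  rw [GG, h1, Set.image_insert_eq, Submodule.span_insert, GG, sup_comm]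

/-- If `x • ` maps generators of the span into `Q`, it maps the whole span into `Q`. -/
theorem smul_span_le {x : A} {s : Set M} {Q : Submodule k M}
    (h : ∀ u ∈ s, x • u ∈ Q) : ∀ u ∈ Submodule.span k s, x • u ∈ Q := by
  intro u hu
  induction hu using Submodule.span_induction with
  | mem u hu => exact h u hu
  | zero => simpa using Q.zero_mem
  | add u w _ _ hu hw => rw [smul_add]; exact Q.add_mem hu hw
  | smul r u _ hu => rw [ksmul_comm]; exact Q.smul_mem r hu

theorem smul_GG {x : A} {b : A} {v : M} {m : ℕ} {Q : Submodule k M}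
    (h : ∀ i < m, x • ((b ^ i) • v) ∈ Q) : ∀ u ∈ GG k b v m, x • u ∈ Q := by
  apply smul_span_le
  rintro u ⟨i, hi, rfl⟩
  exact h i hi

theorem b_smul_pow (b : A) (v : M) (i : ℕ) : b • ((b ^ i) • v) = (b ^ (i + 1)) • v := by
  rw [← mul_smul, ← pow_succ']

theorem b_smul_GG (b : A) (v : M) (m : ℕ) : ∀ u ∈ GG k b v m, b • u ∈ GG k b v (m + 1) := by
  apply smul_GG
  intro i hi
  rw [b_smul_pow]
  exact mem_GG b v (by omega)

theorem GG_split {b : A} {v : M} {m : ℕ} {w : M} (hw : w ∈ GG k b v (m + 1)) :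
    ∃ u ∈ GG k b v m, ∃ d : k, w = u + d • ((b ^ m) • v) := by
  rw [GG_succ] at hw
  obtain ⟨u, hu, z, hz, rfl⟩ := Submodule.mem_sup.mp hw
  obtain ⟨d, rfl⟩ := Submodule.mem_span_singleton.mp hz
  exact ⟨u, hu, d, rfl⟩

end Stmt13Aux

open Stmt13Aux

/-- Over an algebraically closed field of char `p > 2`, with `g, a, b`
generating `A` and satisfying the `H(λ,μ)`-relations, if a module `M` contains `v ≠ 0`
with `g•v = α•v`, `a•v = β•v`, `β ≠ 0`, then the `k`-span `N` of `v, b•v, …, b^(p-1)•v`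
is an `A`-submodule of `M`, `N` is a simple `A`-module, and any `w ∈ N` which is a common
eigenvector of `g` and `a` is a scalar multiple of `v`. -/
theorem stmt13 {k : Type*} [Field k] [IsAlgClosed k] (p : ℕ) [CharP k p] (hp : 2 < p)
    (n : ℕ) (hn : 0 < n) (hpn : p ∣ n) (lam mu : k)
    {A : Type*} [Ring A] [Algebra k A] (g a b : A)
    (hgen : Algebra.adjoin k ({g, a, b} : Set A) = ⊤)
    (hgn : g ^ n = 1) (hag : a * g = g * a) (hbg : b * g = g * a + g * b)
    (hap : a ^ p = lam • ((1 : A) - g ^ p)) (hbp : b ^ p = mu • ((1 : A) - g ^ p))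
    (hba : b * a = a * b + (1 / 2 : k) • a ^ 2)
    {M : Type*} [AddCommGroup M] [Module k M] [Module A M] [IsScalarTower k A M]
    (v : M) (hv : v ≠ 0) (α β : k) (hβ : β ≠ 0)
    (hgv : g • v = α • v) (hav : a • v = β • v) :
    ∃ N : Submodule A M,
      (N : Set M) =
        (Submodule.span k (Set.range fun i : Fin p => (b ^ (i : ℕ)) • v) : Submodule k M) ∧
      IsSimpleModule A N ∧
      (∀ w ∈ N, (∃ c : k, g • w = c • w) → (∃ c : k, a • w = c • w) →
        ∃ c : k, w = c • v) := by
  classical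
  have hvv0 : (b ^ 0) • v = v := by rw [pow_zero, one_smul]
  -- powers of g on v
  have hgpow : ∀ j : ℕ, (g ^ j) • v = (α ^ j) • v := by
    intro j
    induction j with
    | zero => simp
    | succ j ih =>
      rw [pow_succ, mul_smul, hgv, ksmul_comm, ih, smul_smul, ← pow_succ']
  have hα : α ≠ 0 := by
    intro h0
    have h1 : (g ^ n) • v = (α ^ n) • v := hgpow n
    rw [hgn, one_smul, h0, zero_pow hn.ne', zero_smul] at h1
    exact hv h1
  have hpp : p.Prime := (CharP.char_is_prime_or_zero k p).resolve_right (by omega)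
  have hcast : ∀ m : ℕ, 0 < m → m < p → (m : k) ≠ 0 := by
    intro m hm hmp h0
    have h1 := (CharP.cast_eq_zero_iff k p m).mp h0
    have h2 := Nat.le_of_dvd hm h1
    omega
  -- rearranged relations
  have hab : a * b = b * a - (1 / 2 : k) • a ^ 2 := eq_sub_of_add_eq hba.symm
  have hgb : g * b = b * g - g * a := by rw [hbg]; abel
  -- key triangularity
  have key : ∀ i, (a • ((b ^ i) • v) - β • ((b ^ i) • v) ∈ GG k b v i) ∧
      (g • ((b ^ i) • v) - α • ((b ^ i) • v) ∈ GG k b v i) := by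
    intro i
    induction i using Nat.strong_induction_on with
    | _ i ih =>
      match i with
      | 0 =>
        constructor
        · rw [hvv0, hav, sub_self]; exact (GG k b v 0).zero_mem
        · rw [hvv0, hgv, sub_self]; exact (GG k b v 0).zero_mem
      | (j + 1) =>
        have IH1 := (ih j (by omega)).1
        have IH2 := (ih j (by omega)).2
        have haGj : ∀ u ∈ GG k b v j, a • u ∈ GG k b v j := by
          apply smul_GG
          intro i hi
          have h1 := (ih i (by omega)).1
          have e : a • ((b ^ i) • v) = (a • ((b ^ i) • v) - β • ((b ^ i) • v))
              + β • ((b ^ i) • v) := by abel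
          rw [e]
          exact (GG k b v j).add_mem (GG_mono b v (by omega) h1)
            ((GG k b v j).smul_mem β (mem_GG b v hi))
        have hgGj : ∀ u ∈ GG k b v j, g • u ∈ GG k b v j := by
          apply smul_GG
          intro i hi
          have h1 := (ih i (by omega)).2
          have e : g • ((b ^ i) • v) = (g • ((b ^ i) • v) - α • ((b ^ i) • v))
              + α • ((b ^ i) • v) := by abel
          rw [e]
          exact (GG k b v j).add_mem (GG_mono b v (by omega) h1)
            ((GG k b v j).smul_mem α (mem_GG b v hi))
        obtain ⟨r, IH1, hrd⟩ : ∃ r, r ∈ GG k b v j ∧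
            a • ((b ^ j) • v) = β • ((b ^ j) • v) + r := ⟨_, IH1, by abel⟩
        obtain ⟨s, IH2, hsd⟩ : ∃ s, s ∈ GG k b v j ∧
            g • ((b ^ j) • v) = α • ((b ^ j) • v) + s := ⟨_, IH2, by abel⟩
        have h1 : a • ((b ^ (j + 1)) • v)
            = b • (a • ((b ^ j) • v)) - (1 / 2 : k) • (a • (a • ((b ^ j) • v))) := by
          rw [← b_smul_pow, ← mul_smul, hab, sub_smul, mul_smul, smul_assoc, sq, mul_smul]
        have h3 : a • (a • ((b ^ j) • v)) = β • (β • ((b ^ j) • v) + r) + a • r := by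
          rw [hrd, smul_add, ksmul_comm, hrd]
        have e3 : b • (a • ((b ^ j) • v)) = β • ((b ^ (j + 1)) • v) + b • r := by
          rw [hrd, smul_add, ksmul_comm, b_smul_pow]
        constructor
        · have h4 : a • ((b ^ (j + 1)) • v) - β • ((b ^ (j + 1)) • v)
              = b • r - ((1 / 2 : k) * (β * β)) • ((b ^ j) • v)
                - ((1 / 2 : k) * β) • r - (1 / 2 : k) • (a • r) := by
            rw [h1, h3, e3]
            generalize ((b : A) ^ (j + 1)) • v = X
            generalize ((b : A) ^ j) • v = Y
            generalize (b : A) • r = Z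
            generalize (a : A) • r = W
            module
          rw [h4]
          refine sub_mem (sub_mem (sub_mem ?_ ?_) ?_) ?_
          · exact b_smul_GG b v j r IH1
          · exact (GG k b v (j + 1)).smul_mem _ (mem_GG b v (by omega))
          · exact (GG k b v (j + 1)).smul_mem _ (GG_mono b v (by omega) IH1)
          · exact (GG k b v (j + 1)).smul_mem _ (GG_mono b v (by omega) (haGj r IH1))
        · have e1g : g • ((b ^ (j + 1)) • v)
              = b • (g • ((b ^ j) • v)) - g • (a • ((b ^ j) • v)) := by
            rw [← b_smul_pow, ← mul_smul, hgb, sub_smul, mul_smul, mul_smul]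
          have e2g : b • (g • ((b ^ j) • v)) = α • ((b ^ (j + 1)) • v) + b • s := by
            rw [hsd, smul_add, ksmul_comm, b_smul_pow]
          have e3g : g • (a • ((b ^ j) • v))
              = β • (α • ((b ^ j) • v) + s) + g • r := by
            rw [hrd, smul_add, ksmul_comm, hsd]
          have h4g : g • ((b ^ (j + 1)) • v) - α • ((b ^ (j + 1)) • v)
              = b • s - (β * α) • ((b ^ j) • v) - β • s - g • r := by
            rw [e1g, e2g, e3g]
            generalize ((b : A) ^ (j + 1)) • v = X
            generalize ((b : A) ^ j) • v = Y
            generalize (b : A) • s = Z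
            generalize (g : A) • r = W
            module
          rw [h4g]
          refine sub_mem (sub_mem (sub_mem ?_ ?_) ?_) ?_
          · exact b_smul_GG b v j s IH2
          · exact (GG k b v (j + 1)).smul_mem _ (mem_GG b v (by omega))
          · exact (GG k b v (j + 1)).smul_mem _ (GG_mono b v (by omega) IH2)
          · exact GG_mono b v (by omega) (hgGj r IH1)
  -- global stability
  have haGm : ∀ m, ∀ u ∈ GG k b v m, a • u ∈ GG k b v m := by
    intro m
    apply smul_GG
    intro i hi
    have h1 := (key i).1
    have e : a • ((b ^ i) • v) = (a • ((b ^ i) • v) - β • ((b ^ i) • v))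
        + β • ((b ^ i) • v) := by abel
    rw [e]
    exact (GG k b v m).add_mem (GG_mono b v (by omega) h1)
      ((GG k b v m).smul_mem β (mem_GG b v hi))
  have hgGm : ∀ m, ∀ u ∈ GG k b v m, g • u ∈ GG k b v m := by
    intro m
    apply smul_GG
    intro i hi
    have h1 := (key i).2
    have e : g • ((b ^ i) • v) = (g • ((b ^ i) • v) - α • ((b ^ i) • v))
        + α • ((b ^ i) • v) := by abel
    rw [e]
    exact (GG k b v m).add_mem (GG_mono b v (by omega) h1)
      ((GG k b v m).smul_mem α (mem_GG b v hi))
  -- "lowering" operator T = g - α maps G (m+1) to G m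
  have hTlow : ∀ m, ∀ u ∈ GG k b v (m + 1), g • u - α • u ∈ GG k b v m := by
    intro m u hu
    induction hu using Submodule.span_induction with
    | mem u hu =>
      obtain ⟨i, hi, rfl⟩ := hu
      simp only [Set.mem_Iio] at hi
      match i with
      | 0 =>
        show g • ((b ^ 0) • v) - α • ((b ^ 0) • v) ∈ GG k b v m
        rw [hvv0, hgv, sub_self]
        exact (GG k b v m).zero_mem
      | (i + 1) =>
        show g • ((b ^ (i + 1)) • v) - α • ((b ^ (i + 1)) • v) ∈ GG k b v m
        exact GG_mono b v (by omega) ((key (i + 1)).2)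
    | zero =>
      rw [smul_zero, smul_zero, sub_zero]
      exact (GG k b v m).zero_mem
    | add x y _ _ hx hy =>
      have e : g • (x + y) - α • (x + y) = (g • x - α • x) + (g • y - α • y) := by
        rw [smul_add, smul_add]; abel
      rw [e]; exact (GG k b v m).add_mem hx hy
    | smul c x _ hx =>
      have e : g • (c • x) - α • (c • x) = c • (g • x - α • x) := by
        rw [ksmul_comm]
        generalize (g : A) • x = X
        module
      rw [e]; exact (GG k b v m).smul_mem c hx
  -- fine lowering
  have hlow : ∀ i, g • ((b ^ (i + 1)) • v) - α • ((b ^ (i + 1)) • v)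
      + (((i + 1 : ℕ) : k) * (α * β)) • ((b ^ i) • v) ∈ GG k b v i := by
    intro i
    induction i with
    | zero =>
      have e : g • ((b ^ 1) • v) = α • ((b ^ 1) • v) - (α * β) • ((b ^ 0) • v) := by
        rw [pow_one, pow_zero, one_smul, ← mul_smul, hgb, sub_smul, mul_smul, mul_smul,
          hgv, hav, ksmul_comm, ksmul_comm, hgv, smul_smul, mul_comm β α]
      rw [e]
      have e2 : α • ((b ^ 1) • v) - (α * β) • ((b ^ 0) • v) - α • ((b ^ 1) • v)
          + (((0 + 1 : ℕ) : k) * (α * β)) • ((b ^ 0) • v) = 0 := by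
        have hc1 : ((0 + 1 : ℕ) : k) = 1 := by norm_num
        rw [hc1]
        generalize ((b : A) ^ 1) • v = X
        generalize ((b : A) ^ 0) • v = Y
        module
      rw [e2]
      exact (GG k b v 0).zero_mem
    | succ i ihi =>
      obtain ⟨t, ht, hgd⟩ : ∃ t, t ∈ GG k b v i ∧ g • ((b ^ (i + 1)) • v)
          = α • ((b ^ (i + 1)) • v)
            - (((i + 1 : ℕ) : k) * (α * β)) • ((b ^ i) • v) + t := ⟨_, ihi, by abel⟩
      obtain ⟨r, hr, had⟩ : ∃ r, r ∈ GG k b v (i + 1) ∧ a • ((b ^ (i + 1)) • v)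
          = β • ((b ^ (i + 1)) • v) + r := ⟨_, (key (i + 1)).1, by abel⟩
      obtain ⟨s, hs, hgd'⟩ : ∃ s, s ∈ GG k b v (i + 1) ∧ g • ((b ^ (i + 1)) • v)
          = α • ((b ^ (i + 1)) • v) + s := ⟨_, (key (i + 1)).2, by abel⟩
      have e1 : g • ((b ^ (i + 2)) • v)
          = b • (g • ((b ^ (i + 1)) • v)) - g • (a • ((b ^ (i + 1)) • v)) := by
        rw [← b_smul_pow, ← mul_smul, hgb, sub_smul, mul_smul, mul_smul]
      have e2 : b • (g • ((b ^ (i + 1)) • v))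
          = α • ((b ^ (i + 2)) • v)
            - (((i + 1 : ℕ) : k) * (α * β)) • ((b ^ (i + 1)) • v) + b • t := by
        rw [hgd, smul_add, smul_sub, ksmul_comm, ksmul_comm, b_smul_pow, b_smul_pow]
      have e3 : g • (a • ((b ^ (i + 1)) • v))
          = β • (α • ((b ^ (i + 1)) • v) + s) + g • r := by
        rw [had, smul_add, ksmul_comm, hgd']
      have h4 : g • ((b ^ (i + 2)) • v) - α • ((b ^ (i + 2)) • v)
          + (((i + 2 : ℕ) : k) * (α * β)) • ((b ^ (i + 1)) • v)
          = b • t - β • s - g • r := by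
        rw [e1, e2, e3]
        push_cast
        generalize ((b : A) ^ (i + 2)) • v = X
        generalize ((b : A) ^ (i + 1)) • v = Y
        generalize (b : A) • t = Z
        generalize (g : A) • r = W
        module
      rw [h4]
      refine sub_mem (sub_mem ?_ ?_) ?_
      · exact b_smul_GG b v i t ht
      · exact (GG k b v (i + 1)).smul_mem β hs
      · exact hgGm (i + 1) r hr
  -- linear independence: b^m • v ∉ G m for m < p
  have hind : ∀ m, m < p → (b ^ m) • v ∉ GG k b v m := by
    intro m
    induction m using Nat.strong_induction_on with
    | _ m ih =>
      intro hmp hmem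
      match m, hmem, hmp with
      | 0, hmem, hmp =>
        rw [GG_zero, Submodule.mem_bot, hvv0] at hmem
        exact hv hmem
      | (j + 1), hmem, hmp =>
        have h1 : g • ((b ^ (j + 1)) • v) - α • ((b ^ (j + 1)) • v) ∈ GG k b v j :=
          hTlow j _ hmem
        have h2 := hlow j
        have e : (((j + 1 : ℕ) : k) * (α * β)) • ((b ^ j) • v)
            = (g • ((b ^ (j + 1)) • v) - α • ((b ^ (j + 1)) • v)
              + (((j + 1 : ℕ) : k) * (α * β)) • ((b ^ j) • v))
              - (g • ((b ^ (j + 1)) • v) - α • ((b ^ (j + 1)) • v)) := by abel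
        have h3 : (((j + 1 : ℕ) : k) * (α * β)) • ((b ^ j) • v) ∈ GG k b v j := by
          rw [e]; exact sub_mem h2 h1
        have hC : ((j + 1 : ℕ) : k) * (α * β) ≠ 0 :=
          mul_ne_zero (hcast (j + 1) (by omega) (by omega)) (mul_ne_zero hα hβ)
        have h5 : (b ^ j) • v ∈ GG k b v j := by
          have h4 := (GG k b v j).smul_mem ((((j + 1 : ℕ) : k) * (α * β))⁻¹) h3
          rwa [smul_smul, inv_mul_cancel₀ hC, one_smul] at h4
        exact ih j (by omega) (by omega) h5
  -- T w is not too low for w between levels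
  have hTnot : ∀ m, m + 1 < p → ∀ w, w ∈ GG k b v (m + 2) → w ∉ GG k b v (m + 1) →
      g • w - α • w ∉ GG k b v m := by
    intro m hmp w hw hw' hcon
    obtain ⟨u, hu, d, rfl⟩ := GG_split hw
    have hd : d ≠ 0 := by
      rintro rfl
      refine hw' ?_
      rw [zero_smul, add_zero]
      exact hu
    have h1 : g • u - α • u ∈ GG k b v m := hTlow m u hu
    have h2 := hlow m
    have e : (d * (((m + 1 : ℕ) : k) * (α * β))) • ((b ^ m) • v)
        = d • (g • ((b ^ (m + 1)) • v) - α • ((b ^ (m + 1)) • v)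
            + (((m + 1 : ℕ) : k) * (α * β)) • ((b ^ m) • v))
          + (g • u - α • u)
          - (g • (u + d • ((b ^ (m + 1)) • v)) - α • (u + d • ((b ^ (m + 1)) • v))) := by
      have exp1 : g • (u + d • ((b ^ (m + 1)) • v))
          = g • u + d • (g • ((b ^ (m + 1)) • v)) := by
        rw [smul_add, ksmul_comm]
      rw [exp1]
      generalize (g : A) • (((b : A) ^ (m + 1)) • v) = X1
      generalize (g : A) • u = X2
      generalize ((b : A) ^ (m + 1)) • v = X3
      generalize ((b : A) ^ m) • v = X4
      module
    have h3 : (d * (((m + 1 : ℕ) : k) * (α * β))) • ((b ^ m) • v) ∈ GG k b v m := by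
      rw [e]
      exact sub_mem (add_mem ((GG k b v m).smul_mem d h2) h1) hcon
    have hC : d * (((m + 1 : ℕ) : k) * (α * β)) ≠ 0 :=
      mul_ne_zero hd (mul_ne_zero (hcast (m + 1) (by omega) (by omega))
        (mul_ne_zero hα hβ))
    have h5 : (b ^ m) • v ∈ GG k b v m := by
      have h4 := (GG k b v m).smul_mem ((d * (((m + 1 : ℕ) : k) * (α * β)))⁻¹) h3
      rwa [smul_smul, inv_mul_cancel₀ hC, one_smul] at h4
    exact hind m (by omega) h5
  -- k-scalars act on A-submodules
  have hSk : ∀ (S : Submodule A M) (r : k) (x : M), x ∈ S → r • x ∈ S := by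
    intro S r x hx
    rw [← algebraMap_smul A r x]
    exact S.smul_mem _ hx
  -- descent: any nonzero w in G (m+1) generates v in any A-submodule containing w
  have hreach : ∀ m, m < p → ∀ w, w ∈ GG k b v (m + 1) → w ≠ 0 →
      ∀ S : Submodule A M, w ∈ S → v ∈ S := by
    intro m
    induction m with
    | zero =>
      intro _ w hw hw0 S hwS
      rw [GG_one] at hw
      obtain ⟨c, hc⟩ := Submodule.mem_span_singleton.mp hw
      have hc0 : c ≠ 0 := by rintro rfl; rw [zero_smul] at hc; exact hw0 hc.symm
      have : v = c⁻¹ • w := by rw [← hc, smul_smul, inv_mul_cancel₀ hc0, one_smul]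
      rw [this]
      exact hSk S c⁻¹ w hwS
    | succ m ihm =>
      intro hmp w hw hw0 S hwS
      by_cases hcase : w ∈ GG k b v (m + 1)
      · exact ihm (by omega) w hcase hw0 S hwS
      · have hT : g • w - α • w ∈ GG k b v (m + 1) := hTlow (m + 1) w hw
        have hTn : g • w - α • w ∉ GG k b v m := hTnot m hmp w hw hcase
        have hT0 : g • w - α • w ≠ 0 := by
          intro h
          exact hTn (h ▸ (GG k b v m).zero_mem)
        have hTS : g • w - α • w ∈ S := S.sub_mem (S.smul_mem g hwS) (hSk S α w hwS)
        exact ihm (by omega) _ hT hT0 S hTS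
  -- eigenvector descent
  have heig : ∀ m, m < p → ∀ w, w ∈ GG k b v (m + 1) → (∃ c : k, g • w = c • w) →
      ∃ c : k, w = c • v := by
    intro m
    induction m with
    | zero =>
      intro _ w hw _
      rw [GG_one] at hw
      obtain ⟨c, hc⟩ := Submodule.mem_span_singleton.mp hw
      exact ⟨c, hc.symm⟩
    | succ m ihm =>
      intro hmp w hw hcw
      by_cases hcase : w ∈ GG k b v (m + 1)
      · exact ihm (by omega) w hcase hcw
      · exfalso
        obtain ⟨c, hc⟩ := hcw
        have hT : g • w - α • w ∈ GG k b v (m + 1) := hTlow (m + 1) w hw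
        have hTn : g • w - α • w ∉ GG k b v m := hTnot m hmp w hw hcase
        have e : g • w - α • w = (c - α) • w := by rw [hc, sub_smul]
        by_cases hcα : c = α
        · apply hTn
          rw [e, hcα, sub_self, zero_smul]
          exact (GG k b v m).zero_mem
        · apply hcase
          have e2 : w = (c - α)⁻¹ • (g • w - α • w) := by
            rw [e, smul_smul, inv_mul_cancel₀ (sub_ne_zero.mpr hcα), one_smul]
          rw [e2]
          exact (GG k b v (m + 1)).smul_mem _ hT
  -- v is in G p
  have hv0 : v ∈ GG k b v p := by
    have h := mem_GG (k := k) b v (show 0 < p by omega)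
    rwa [hvv0] at h
  -- b stabilizes G p
  have hbpv : (b ^ p) • v = (mu * (1 - α ^ p)) • v := by
    rw [hbp, smul_assoc, sub_smul, one_smul, hgpow, mul_sub, sub_smul, mul_one, smul_sub,
      smul_smul]
  have hbGp : ∀ u ∈ GG k b v p, b • u ∈ GG k b v p := by
    apply smul_GG
    intro i hi
    rw [b_smul_pow]
    rcases Nat.lt_or_ge (i + 1) p with h | h
    · exact mem_GG b v h
    · have hip : i + 1 = p := by omega
      rw [hip, hbpv]
      exact (GG k b v p).smul_mem _ hv0
  -- A-stability of G p
  have main : ∀ x : A, ∀ u ∈ GG k b v p, x • u ∈ GG k b v p := by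
    intro x
    have hx : x ∈ Algebra.adjoin k ({g, a, b} : Set A) := by rw [hgen]; trivial
    induction hx using Algebra.adjoin_induction with
    | mem y hy =>
      rcases hy with rfl | rfl | rfl
      · exact hgGm p
      · exact haGm p
      · exact hbGp
    | algebraMap r =>
      intro u hu
      rw [algebraMap_smul]
      exact (GG k b v p).smul_mem r hu
    | add x y _ _ ihx ihy =>
      intro u hu
      rw [add_smul]
      exact (GG k b v p).add_mem (ihx u hu) (ihy u hu)
    | mul x y _ _ ihx ihy =>
      intro u hu
      rw [mul_smul]
      exact ihx _ (ihy u hu)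
  -- the submodule N
  let N : Submodule A M :=
    { carrier := (GG k b v p : Set M)
      add_mem' := fun hx hy => (GG k b v p).add_mem hx hy
      zero_mem' := (GG k b v p).zero_mem
      smul_mem' := fun c {x} hx => main c x hx }
  have hmemN : ∀ x : M, x ∈ N ↔ x ∈ GG k b v p := fun x => Iff.rfl
  have hNk : Submodule.span k (Set.range fun i : Fin p => (b ^ (i : ℕ)) • v)
      = GG k b v p := by
    have hset : (Set.range fun i : Fin p => (b ^ (i : ℕ)) • v)
        = (fun i => (b ^ i) • v) '' Set.Iio p := by
      ext x
      constructor
      · rintro ⟨i, rfl⟩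
        exact ⟨(i : ℕ), i.2, rfl⟩
      · rintro ⟨i, hi, rfl⟩
        exact ⟨⟨i, hi⟩, rfl⟩
    rw [hset, GG]
  have hvN : v ∈ N := hv0
  have hp1 : p - 1 + 1 = p := by omega
  refine ⟨N, ?_, ?_, ?_⟩
  · show (GG k b v p : Set M) = _
    rw [hNk]
  · rw [isSimpleModule_iff_isAtom]
    constructor
    · intro hbot
      rw [hbot] at hvN
      exact hv (by simpa using hvN)
    · intro S hS
      by_contra hS0
      obtain ⟨w, hwS, hw0⟩ := Submodule.ne_bot_iff S |>.mp hS0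
      have hwN : w ∈ GG k b v p := (hmemN w).mp (hS.le hwS)
      have hwN' : w ∈ GG k b v (p - 1 + 1) := by rw [hp1]; exact hwN
      have hvS : v ∈ S := hreach (p - 1) (by omega) w hwN' hw0 S hwS
      have hle : N ≤ S := by
        intro x hx
        have hx' : x ∈ GG k b v p := (hmemN x).mp hx
        have : GG k b v p ≤ S.restrictScalars k := by
          rw [GG]
          apply Submodule.span_le.mpr
          rintro y ⟨i, hi, rfl⟩
          exact S.smul_mem (b ^ i) hvS
        exact this hx'
      exact hS.ne (le_antisymm hS.le hle)
  · intro w hwN' hgw _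
    have hwG : w ∈ GG k b v (p - 1 + 1) := by
      rw [hp1]
      exact (hmemN w).mp hwN'
    exact heig (p - 1) (by omega) w hwG hgw
end

section
/- Let k be a field of characteristic p > 2 and A an associative unital k-algebra containing elements a, b with ba = ab + (1/2)a² and b^p = 0. Then for every integer m ≥ 0 one has b^m·a·b^{p−1} = (m!/2^m)·a^{m+1}·b^{p−1}. -/
/-- In char `p > 2`, if `b*a = a*b + (1/2)a^2` and `b^p = 0`, then
`b^m * a * b^(p-1) = (m!/2^m) • (a^(m+1) * b^(p-1))` for all `m ≥ 0`. -/
theorem stmt16 {k : Type*} [Field k] (p : ℕ) [CharP k p] (hp : 2 < p)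
    {A : Type*} [Ring A] [Algebra k A] (a b : A)
    (hba : b * a = a * b + (1 / 2 : k) • a ^ 2) (hbp : b ^ p = 0) :
    ∀ m : ℕ, b ^ m * a * b ^ (p - 1)
      = ((m.factorial : k) / 2 ^ m) • (a ^ (m + 1) * b ^ (p - 1)) := by
  have hbb : b * b ^ (p - 1) = 0 := by
    have h1 : p - 1 + 1 = p := by omega
    rw [← pow_succ', h1, hbp]
  have hban : ∀ n : ℕ, b * a ^ (n + 1)
      = a ^ (n + 1) * b + (((n + 1 : ℕ) : k) / 2) • a ^ (n + 2) := by
    intro n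
    induction n with
    | zero => simpa [pow_one] using hba
    | succ n ih =>
      calc b * a ^ (n + 1 + 1) = (b * a ^ (n + 1)) * a := by
            rw [mul_assoc, ← pow_succ]
        _ = (a ^ (n + 1) * b) * a + (((n + 1 : ℕ) : k) / 2) • (a ^ (n + 2) * a) := by
            rw [ih, add_mul, smul_mul_assoc]
        _ = a ^ (n + 1) * (a * b + (1 / 2 : k) • a ^ 2)
              + (((n + 1 : ℕ) : k) / 2) • a ^ (n + 2 + 1) := by
            rw [mul_assoc, hba, ← pow_succ]
        _ = a ^ (n + 1) * a * b + ((1 / 2 : k) • (a ^ (n + 1) * a ^ 2)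
              + (((n + 1 : ℕ) : k) / 2) • a ^ (n + 2 + 1)) := by
            rw [mul_add, mul_smul_comm, ← mul_assoc, add_assoc]
        _ = a ^ (n + 1 + 1) * b + ((1 / 2 : k) + ((n + 1 : ℕ) : k) / 2) • a ^ (n + 1 + 2) := by
            rw [← pow_succ, ← pow_add, add_smul]
        _ = a ^ (n + 1 + 1) * b + (((n + 1 + 1 : ℕ) : k) / 2) • a ^ (n + 1 + 2) := by
            rw [show ((1 : k) / 2 + ((n + 1 : ℕ) : k) / 2) = (((n + 1 + 1 : ℕ) : k) / 2) from by
              push_cast; ring]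
  have key : ∀ m n : ℕ, (n.factorial : k) • (b ^ m * a ^ (n + 1) * b ^ (p - 1))
      = (((m + n).factorial : k) / 2 ^ m) • (a ^ (m + n + 1) * b ^ (p - 1)) := by
    intro m
    induction m with
    | zero => intro n; simp
    | succ m ih =>
      intro n
      have e1 : b ^ (m + 1) * a ^ (n + 1) * b ^ (p - 1)
          = (((n + 1 : ℕ) : k) / 2) • (b ^ m * a ^ (n + 2) * b ^ (p - 1)) := by
        have e : b ^ (m + 1) * a ^ (n + 1) = b ^ m * (b * a ^ (n + 1)) := by
          rw [pow_succ, mul_assoc]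
        rw [e, hban n, mul_add, add_mul, mul_smul_comm, smul_mul_assoc]
        have hz : b ^ m * (a ^ (n + 1) * b) * b ^ (p - 1) = 0 := by
          rw [mul_assoc, mul_assoc, hbb]
          simp
        rw [hz, zero_add]
      rw [e1, smul_smul]
      have hc : (n.factorial : k) * (((n + 1 : ℕ) : k) / 2)
          = (1 / 2 : k) * ((n + 1).factorial : k) := by
        rw [Nat.factorial_succ]; push_cast; ring
      rw [hc, mul_smul, ih (n + 1), smul_smul]
      have hidx : m + (n + 1) = m + 1 + n := by omega
      rw [hidx]
      congr 1
      ring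
  intro m
  have h := key m 0
  simpa using h
end

section
/- Let k be a field of characteristic p > 2, n = p^s·t with s ≥ 1, p ∤ t and t > 1, ξ a primitive t-th root of unity in k, and let A be an associative unital k-algebra containing elements g, a, b satisfying the H(1,0)-relations. For 1 ≤ i ≤ t−1 let e_i = (1/t)·Σ_{j=0}^{t−1} (ξ^{−i·p^s}·g^{p^s})^j and set ẽ_i = a^{p^s−p+1}·b^{p−1}·e_i. Then ẽ_i² = ((p−1)!/2^{p−1})·(1 − ξ^{i·p^s})·ẽ_i, and the scalar ((p−1)!/2^{p−1})·(1 − ξ^{i·p^s}) is nonzero in k; consequently ê_i := (((p−1)!/2^{p−1})·(1 − ξ^{i·p^s}))^{-1}·ẽ_i satisfies ê_i² = ê_i. -/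
/-!
The element `g ^ p ^ s` commutes with `a` and `b`, because
`b * g ^ j = g ^ j * b + j • g ^ j * a` and `p ^ s = 0` in `k`; so `e_i` is the idempotent
cutting out the `ξ ^ (i * p ^ s)`-eigenspace of `g ^ p ^ s`, and it commutes with
`w = a ^ m * b ^ (p - 1)`, `m = p ^ s - p + 1`.
Since `m ≡ 1 mod p`, moving `b` past `a ^ m` turns it into `b + a / 2`, and because `b ^ p = 0`,
`(b + a / 2) ^ (p - 1) * b ^ (p - 1) = ((p - 1)! / 2 ^ (p - 1)) • a ^ (p - 1) * b ^ (p - 1)`.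
Hence `w * w = ((p - 1)! / 2 ^ (p - 1)) • w * a ^ p ^ s`, and by Frobenius
`a ^ p ^ s = (1 - g ^ p) ^ p ^ (s - 1) = 1 - g ^ p ^ s`, which acts on `e_i` as the scalar
`1 - ξ ^ (i * p ^ s)`. This scalar is nonzero because `ξ ^ p ^ s` is again a primitive
`t`-th root of unity.
-/

open Finset

theorem mul_pow_eq_pow_mul_add_nsmul {A : Type*} [Semiring A] {g a b : A}
    (hag : Commute a g) (hbg : b * g = g * a + g * b) (j : ℕ) :
    b * g ^ j = g ^ j * b + j • (g ^ j * a) := by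
  induction j with
  | zero => simp
  | succ j ih =>
    calc b * g ^ (j + 1) = b * g ^ j * g := by rw [pow_succ, mul_assoc]
      _ = g ^ j * (b * g) + j • (g ^ j * (a * g)) := by
        rw [ih, add_mul, smul_mul_assoc, mul_assoc, mul_assoc]
      _ = g ^ (j + 1) * b + (j + 1) • (g ^ (j + 1) * a) := by
        rw [hbg, hag.eq, mul_add, ← mul_assoc, ← mul_assoc, ← pow_succ, succ_nsmul]
        abel

theorem commute_pow_of_mul_eq_mul_add_mul {A : Type*} [Ring A] {g a b : A}
    (hag : Commute a g) (hbg : b * g = g * a + g * b) {n : ℕ} (hn : (n : A) = 0) :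
    Commute b (g ^ n) := by
  rw [Commute, SemiconjBy, mul_pow_eq_pow_mul_add_nsmul hag hbg, nsmul_eq_mul, hn, zero_mul,
    add_zero]

section TwistedCommutation

variable {R A : Type*} [CommSemiring R] [Semiring A] [Algebra R A] {a b : A} {c : R}

theorem mul_pow_eq_pow_mul_add_smul (hba : b * a = a * b + c • a ^ 2) (j : ℕ) :
    b * a ^ j = a ^ j * b + (j * c) • a ^ (j + 1) := by
  induction j with
  | zero => simp
  | succ j ih =>
    calc b * a ^ (j + 1) = b * a ^ j * a := by rw [pow_succ, mul_assoc]
      _ = a ^ j * (b * a) + (j * c) • (a ^ (j + 1) * a) := by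
        rw [ih, add_mul, smul_mul_assoc, mul_assoc]
      _ = a ^ (j + 1) * b + ((j + 1 : ℕ) * c) • a ^ (j + 1 + 1) := by
        rw [hba, mul_add, mul_smul_comm, ← mul_assoc, ← pow_succ, ← pow_succ, ← pow_add]
        push_cast
        rw [add_mul, one_mul, add_smul]
        abel

theorem pow_mul_pow_eq_pow_mul_add_smul_pow (hba : b * a = a * b + c • a ^ 2) {m : ℕ}
    (hm : (m : R) = 1) (j : ℕ) : b ^ j * a ^ m = a ^ m * (b + c • a) ^ j := by
  have hbm : b * a ^ m = a ^ m * (b + c • a) := by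
    rw [mul_pow_eq_pow_mul_add_smul hba, hm, one_mul, mul_add, mul_smul_comm, ← pow_succ]
  induction j with
  | zero => simp
  | succ j ih => rw [pow_succ', mul_assoc, ih, ← mul_assoc, hbm, mul_assoc, ← pow_succ']

theorem add_smul_pow_mul_pow_eq (hba : b * a = a * b + c • a ^ 2) {q : ℕ}
    (hb : b ^ (q + 1) = 0) (j : ℕ) :
    (b + c • a) ^ j * b ^ q = (j.factorial * c ^ j : R) • (a ^ j * b ^ q) := by
  induction j with
  | zero => simp
  | succ j ih =>
    have hstep :
        (b + c • a) * (a ^ j * b ^ q) = ((j + 1 : ℕ) * c) • (a ^ (j + 1) * b ^ q) := by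
      rw [add_mul, ← mul_assoc, mul_pow_eq_pow_mul_add_smul hba, add_mul, mul_assoc,
        ← pow_succ', hb, mul_zero, zero_add, smul_mul_assoc, smul_mul_assoc, ← mul_assoc a,
        ← pow_succ']
      push_cast
      rw [add_mul, one_mul, add_smul]
    rw [pow_succ', mul_assoc, ih, mul_smul_comm, hstep, smul_smul, Nat.factorial_succ]
    push_cast
    ring_nf

theorem pow_mul_pow_mul_self_eq (hba : b * a = a * b + c • a ^ 2) {m q : ℕ} (hm : (m : R) = 1)
    (hb : b ^ (q + 1) = 0) :
    a ^ m * b ^ q * (a ^ m * b ^ q) =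
      (q.factorial * c ^ q : R) • (a ^ (m + q) * (a ^ m * b ^ q)) := by
  calc a ^ m * b ^ q * (a ^ m * b ^ q) = a ^ m * (a ^ m * ((b + c • a) ^ q * b ^ q)) := by
        rw [mul_assoc, ← mul_assoc (b ^ q), pow_mul_pow_eq_pow_mul_add_smul_pow hba hm]
        simp only [mul_assoc]
    _ = _ := by
        rw [add_smul_pow_mul_pow_eq hba hb, mul_smul_comm, mul_smul_comm]
        simp only [← mul_assoc, ← pow_add]
        ring_nf

end TwistedCommutation

theorem one_sub_pow_char_pow {R A : Type*} [CommRing R] [Ring A] [Algebra R A] (p : ℕ)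
    [Fact p.Prime] [CharP R p] (x : A) (r : ℕ) : (1 - x) ^ p ^ r = 1 - x ^ p ^ r := by
  simpa using congrArg (Polynomial.aeval x) (sub_pow_char_pow (1 : Polynomial R) .X r (p := p))

theorem mul_geom_sum_eq_self_of_pow_eq_one {A : Type*} [Ring A] {u : A} {t : ℕ} (hu : u ^ t = 1) :
    u * ∑ j ∈ range t, u ^ j = ∑ j ∈ range t, u ^ j := by
  have := mul_geom_sum u t
  rw [hu, sub_self, sub_mul, one_mul, sub_eq_zero] at this
  exact this

theorem IsIdempotentElem.inv_smul {k A : Type*} [Field k] [Ring A] [Algebra k A] {x : A}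
    {c : k} (hx : x * x = c • x) (hc : c ≠ 0) : IsIdempotentElem (c⁻¹ • x) := by
  rw [IsIdempotentElem, smul_mul_smul_comm, hx, smul_smul, mul_assoc, inv_mul_cancel₀ hc, mul_one]

theorem mul_mul_self_eq_of_isIdempotentElem {R A : Type*} [CommSemiring R] [Semiring A]
    [Algebra R A] {w y e : A} {γ δ : R} (hw : w * w = γ • (w * y)) (he : IsIdempotentElem e)
    (hwe : Commute w e) (hye : y * e = δ • e) : w * e * (w * e) = (γ * δ) • (w * e) := by
  calc w * e * (w * e) = w * w * (e * e) := by
        rw [mul_assoc, ← mul_assoc e, ← hwe.eq]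
        simp only [mul_assoc]
    _ = (γ * δ) • (w * e) := by
        rw [he.eq, hw, smul_mul_assoc, mul_assoc, hye, mul_smul_comm, smul_smul]

section EigenIdempotent

variable {k A : Type*} [Field k] [Ring A] [Algebra k A]

variable (k) in
/-- For `H = g ^ p ^ s` and `ζ = ξ ^ (i * p ^ s)` this is the paper's `e_i`. -/
def eigenIdempotent (t : ℕ) (ζ : k) (H : A) : A :=
  (t : k)⁻¹ • ∑ j ∈ range t, ζ⁻¹ ^ j • H ^ j

variable {t : ℕ} {ζ : k} {H : A}

theorem eigenIdempotent_eq_geom_sum :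
    eigenIdempotent k t ζ H = (t : k)⁻¹ • ∑ j ∈ range t, (ζ⁻¹ • H) ^ j := by
  simp only [eigenIdempotent, smul_pow]

theorem smul_mul_eigenIdempotent (hζ : ζ ^ t = 1) (hH : H ^ t = 1) :
    (ζ⁻¹ • H) * eigenIdempotent k t ζ H = eigenIdempotent k t ζ H := by
  rw [eigenIdempotent_eq_geom_sum, mul_smul_comm,
    mul_geom_sum_eq_self_of_pow_eq_one (by rw [smul_pow, hH, inv_pow, hζ, inv_one, one_smul])]

theorem isIdempotentElem_eigenIdempotent (hζ : ζ ^ t = 1) (hH : H ^ t = 1) (ht : (t : k) ≠ 0) :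
    IsIdempotentElem (eigenIdempotent k t ζ H) := by
  have hpow : ∀ j, (ζ⁻¹ • H) ^ j * eigenIdempotent k t ζ H = eigenIdempotent k t ζ H := by
    intro j
    induction j with
    | zero => rw [pow_zero, one_mul]
    | succ j ih => rw [pow_succ', mul_assoc, ih, smul_mul_eigenIdempotent hζ hH]
  unfold IsIdempotentElem
  nth_rw 1 [eigenIdempotent_eq_geom_sum]
  rw [smul_mul_assoc, sum_mul]
  simp only [hpow, sum_const, card_range, ← Nat.cast_smul_eq_nsmul k, smul_smul,
    inv_mul_cancel₀ ht, one_smul]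

theorem mul_eigenIdempotent (hζ : ζ ^ t = 1) (hH : H ^ t = 1) (ht : t ≠ 0) :
    H * eigenIdempotent k t ζ H = ζ • eigenIdempotent k t ζ H := by
  have hζ0 : ζ ≠ 0 := by rintro rfl; simp [ht] at hζ
  calc H * eigenIdempotent k t ζ H = (ζ • ζ⁻¹ • H) * eigenIdempotent k t ζ H := by
        rw [smul_smul, mul_inv_cancel₀ hζ0, one_smul]
    _ = ζ • eigenIdempotent k t ζ H := by rw [smul_mul_assoc, smul_mul_eigenIdempotent hζ hH]

theorem Commute.eigenIdempotent_right {x : A} (h : Commute x H) :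
    Commute x (eigenIdempotent k t ζ H) :=
  ((Commute.sum_right _ _ _ fun j _ => (h.pow_right j).smul_right _)).smul_right _

end EigenIdempotent

theorem natCast_pow_char_eq_zero (k : Type*) {A : Type*} [CommSemiring k] [Semiring A]
    [Algebra k A] (p : ℕ) [CharP k p] {s : ℕ} (hs : s ≠ 0) : ((p ^ s : ℕ) : A) = 0 := by
  rw [← map_natCast (algebraMap k A), (CharP.cast_eq_zero_iff k p _).2 (dvd_pow_self p hs),
    map_zero]

theorem commute_pow_mul_pow_of_natCast_eq_zero {A : Type*} [Ring A] {g a b : A}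
    (hag : Commute a g) (hbg : b * g = g * a + g * b) {n : ℕ} (hn : (n : A) = 0) (m q : ℕ) :
    Commute (a ^ m * b ^ q) (g ^ n) :=
  ((hag.pow_right _).pow_left m).mul_left
    ((commute_pow_of_mul_eq_mul_add_mul hag hbg hn).pow_left q)

section CharP

variable {k A : Type*} [Field k] [Ring A] [Algebra k A] {p : ℕ} [CharP k p]

theorem natCast_factorial_pred_ne_zero [Fact p.Prime] : ((p - 1).factorial : k) ≠ 0 := by
  rw [Ne, CharP.cast_eq_zero_iff k p, Nat.Prime.dvd_factorial Fact.out]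
  have := (Fact.out : p.Prime).pos
  omega

theorem pow_mul_pow_mul_self_eq_smul_mul_one_sub [Fact p.Prime] {s : ℕ} (hs : s ≠ 0)
    {g a b : A} {c : k} (hag : Commute a g) (hbg : b * g = g * a + g * b) (hap : a ^ p = 1 - g ^ p)
    (hbp : b ^ p = 0) (hba : b * a = a * b + c • a ^ 2) :
    a ^ (p ^ s - p + 1) * b ^ (p - 1) * (a ^ (p ^ s - p + 1) * b ^ (p - 1)) =
      ((p - 1).factorial * c ^ (p - 1) : k) •
        (a ^ (p ^ s - p + 1) * b ^ (p - 1) * (1 - g ^ p ^ s)) := by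
  have hp := (Fact.out : p.Prime).one_lt
  have hps : p ≤ p ^ s := Nat.le_self_pow hs p
  have hm : ((p ^ s - p + 1 : ℕ) : k) = 1 := by
    rw [Nat.cast_add, Nat.cast_sub hps, natCast_pow_char_eq_zero k p hs, CharP.cast_eq_zero,
      sub_self, zero_add, Nat.cast_one]
  have hb : b ^ (p - 1 + 1) = 0 := by rwa [Nat.sub_add_cancel hp.le]
  have hfrob : a ^ p ^ s = 1 - g ^ p ^ s := by
    obtain ⟨r, rfl⟩ := Nat.exists_eq_succ_of_ne_zero hs
    rw [pow_succ', pow_mul, pow_mul, hap, one_sub_pow_char_pow (R := k) p]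
  rw [pow_mul_pow_mul_self_eq hba hm hb, show p ^ s - p + 1 + (p - 1) = p ^ s by omega, hfrob,
    ← ((Commute.one_right _).sub_right (commute_pow_mul_pow_of_natCast_eq_zero hag hbg
      (natCast_pow_char_eq_zero k p hs) _ _)).eq]

end CharP

theorem stmt18_general {k : Type*} [Field k] (p : ℕ) [CharP k p] (hp : 2 < p)
    (s t : ℕ) (hs : 1 ≤ s) (hpt : ¬ p ∣ t)
    (ξ : k) (hξ : IsPrimitiveRoot ξ t)
    {A : Type*} [Ring A] [Algebra k A] (g a b : A)
    (hgn : g ^ (p ^ s * t) = 1) (hag : a * g = g * a) (hbg : b * g = g * a + g * b)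
    (hap : a ^ p = 1 - g ^ p) (hbp : b ^ p = 0)
    (hba : b * a = a * b + (1 / 2 : k) • a ^ 2)
    (i : ℕ) (hi1 : 1 ≤ i) (hi2 : i ≤ t - 1) :
    let e : A :=
      (t : k)⁻¹ • ∑ j ∈ Finset.range t, (((ξ ^ (i * p ^ s))⁻¹) ^ j) • (g ^ (p ^ s)) ^ j
    let et : A := a ^ (p ^ s - p + 1) * b ^ (p - 1) * e
    let c : k := (((p - 1).factorial : k) / 2 ^ (p - 1)) * (1 - ξ ^ (i * p ^ s))
    et * et = c • et ∧ c ≠ 0 ∧ (c⁻¹ • et) * (c⁻¹ • et) = c⁻¹ • et := by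
  intro e et c
  have : Fact p.Prime := ⟨(CharP.char_is_prime_or_zero k p).resolve_right (by omega)⟩
  have hξs : IsPrimitiveRoot (ξ ^ p ^ s) t :=
    hξ.pow_of_coprime _ (((Nat.Prime.coprime_iff_not_dvd Fact.out).2 hpt).pow_left s)
  have hζ : ξ ^ (i * p ^ s) = (ξ ^ p ^ s) ^ i := by rw [← pow_mul, mul_comm]
  have hζt : (ξ ^ (i * p ^ s)) ^ t = 1 := by rw [hζ, pow_right_comm, hξs.pow_eq_one, one_pow]
  have hζ1 : ξ ^ (i * p ^ s) ≠ 1 := hζ ▸ hξs.pow_ne_one_of_pos_of_lt (by omega) (by omega)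
  have hgt : (g ^ p ^ s) ^ t = 1 := by rw [← pow_mul, hgn]
  have ht0 : (t : k) ≠ 0 := by rwa [Ne, CharP.cast_eq_zero_iff k p]
  have hsq : et * et = c • et := by
    have hs0 : s ≠ 0 := by omega
    have hHe : g ^ p ^ s * e = ξ ^ (i * p ^ s) • e := mul_eigenIdempotent hζt hgt (by omega)
    have hc : c = ((p - 1).factorial * (1 / 2 : k) ^ (p - 1)) * (1 - ξ ^ (i * p ^ s)) := by
      simp only [c, div_eq_mul_inv, one_mul, inv_pow]
    rw [hc]
    exact mul_mul_self_eq_of_isIdempotentElem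
      (pow_mul_pow_mul_self_eq_smul_mul_one_sub hs0 hag hbg hap hbp hba)
      (isIdempotentElem_eigenIdempotent hζt hgt ht0)
      (commute_pow_mul_pow_of_natCast_eq_zero hag hbg
        (natCast_pow_char_eq_zero k p hs0) _ _).eigenIdempotent_right
      (by rw [sub_mul, one_mul, hHe, sub_smul, one_smul])
  have hc : c ≠ 0 :=
    mul_ne_zero (div_ne_zero natCast_factorial_pred_ne_zero
      (pow_ne_zero _ (Ring.two_ne_zero (by rw [ringChar.eq k p]; omega))))
      (sub_ne_zero.2 hζ1.symm)
  exact ⟨hsq, hc, IsIdempotentElem.inv_smul hsq hc⟩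

/-- Over a field of char `p > 2`, with `n = p^s t`, `t > 1`, `p ∤ t`,
`ξ` a primitive `t`-th root of unity, `g, a, b` satisfying the `H(1,0)`-relations, and
`1 ≤ i ≤ t-1`, the element `ẽ_i = a^(p^s-p+1) * b^(p-1) * e_i` satisfies
`ẽ_i² = c • ẽ_i` where `c = ((p-1)!/2^(p-1))(1 - ξ^(i p^s)) ≠ 0`; hence
`ê_i = c⁻¹ • ẽ_i` is an idempotent. -/
theorem stmt18 {k : Type*} [Field k] (p : ℕ) [CharP k p] (hp : 2 < p)
    (s t : ℕ) (hs : 1 ≤ s) (ht : 1 < t) (hpt : ¬ p ∣ t)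
    (ξ : k) (hξ : IsPrimitiveRoot ξ t)
    {A : Type*} [Ring A] [Algebra k A] (g a b : A)
    (hgn : g ^ (p ^ s * t) = 1) (hag : a * g = g * a) (hbg : b * g = g * a + g * b)
    (hap : a ^ p = 1 - g ^ p) (hbp : b ^ p = 0)
    (hba : b * a = a * b + (1 / 2 : k) • a ^ 2)
    (i : ℕ) (hi1 : 1 ≤ i) (hi2 : i ≤ t - 1) :
    let e : A :=
      (t : k)⁻¹ • ∑ j ∈ Finset.range t, (((ξ ^ (i * p ^ s))⁻¹) ^ j) • (g ^ (p ^ s)) ^ j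
    let et : A := a ^ (p ^ s - p + 1) * b ^ (p - 1) * e
    let c : k := (((p - 1).factorial : k) / 2 ^ (p - 1)) * (1 - ξ ^ (i * p ^ s))
    et * et = c • et ∧ c ≠ 0 ∧ (c⁻¹ • et) * (c⁻¹ • et) = c⁻¹ • et :=
  stmt18_general p hp s t hs hpt ξ hξ g a b hgn hag hbg hap hbp hba i hi1 hi2
end
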